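/- arXiv:2001.09525 — 6 statements merged into one kernel-verified Lean document; each statement's English description precedes it below -/
import Mathlib

section
/- Every triangle ABC has an isosceles container whose area is strictly smaller than √2 · t(ABC). -/
open EuclideanGeometry MeasureTheory Real

noncomputable section

/-- The Euclidean plane. -/
abbrev Pt : Type := EuclideanSpace ℝ (Fin 2)

/-- The closed triangular region with vertices `A`, `B`, `C`
(the convex hull of the three vertices). -/
def tri (A B C : Pt) : Set Pt := convexHull ℝ {A, B, C}

/-- The area of the triangle `A B C`:
the 2-dimensional Lebesgue measure of its convex hull. -/
def triArea (A B C : Pt) : ℝ := (volume (tri A B C)).toReal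

/-- A triangle is isosceles if at least two of its side lengths coincide. -/
def IsIsosceles (A B C : Pt) : Prop :=
  dist B C = dist C A ∨ dist C A = dist A B ∨ dist A B = dist B C

/-- `S P R` is an isosceles container for the triangle `A B C`:
it is a genuine isosceles triangle whose convex hull contains that of `A B C`. -/
def IsIsoscelesContainer (A B C S P R : Pt) : Prop :=
  AffineIndependent ℝ ![S, P, R] ∧ IsIsosceles S P R ∧ tri A B C ⊆ tri S P R

/-- `S P R` is a minimum area isosceles container for the triangle `A B C`. -/
def IsMinIsoscelesContainer (A B C S P R : Pt) : Prop :=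
  IsIsoscelesContainer A B C S P R ∧
    ∀ S' P' R' : Pt, IsIsoscelesContainer A B C S' P' R' →
      triArea S P R ≤ triArea S' P' R'

/-- `Z` lies on the ray starting at `X` passing through `Y`. -/
def OnRay (X Y Z : Pt) : Prop := SameRay ℝ (Y - X) (Z - X)

/-! ### Auxiliary machinery -/


def e23 : Fin 2 ≃ {x : Fin 3 // x ≠ 0} where
  toFun i := ⟨i.succ, Fin.succ_ne_zero i⟩
  invFun j := ⟨j.1.1 - 1, by omega⟩
  left_inv := by decide
  right_inv := by decide

lemma aff_iff_lin (X Y Z : Pt) :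
    AffineIndependent ℝ ![X, Y, Z] ↔ LinearIndependent ℝ ![Y - X, Z - X] := by
  rw [affineIndependent_iff_linearIndependent_vsub ℝ ![X, Y, Z] 0]
  rw [← linearIndependent_equiv e23]
  constructor <;> intro h <;> convert h using 2 <;>
    · first | rfl | funext i; fin_cases i <;> simp [e23] <;> rfl

lemma vol_tri_image (A B C S P R : Pt) (M : Pt →ₗ[ℝ] Pt)
    (hP : P - S = M (B - A)) (hR : R - S = M (C - A)) :
    volume (tri S P R) = ENNReal.ofReal |M.det| * volume (tri A B C) := by
  have fS : (S - M A) + M A = S := by abel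
  have fP : (S - M A) + M B = P := by
    have h1 : M B - M A = M (B - A) := by rw [map_sub]
    have h2 : P = S + M (B - A) := by rw [← hP]; abel
    rw [h2, ← h1]; abel
  have fR : (S - M A) + M C = R := by
    have h1 : M C - M A = M (C - A) := by rw [map_sub]
    have h2 : R = S + M (C - A) := by rw [← hR]; abel
    rw [h2, ← h1]; abel
  let f : Pt →ᵃ[ℝ] Pt :=
    { toFun := fun x => (S - M A) + M x
      linear := M
      map_vadd' := by
        intro x v
        simp only [vadd_eq_add, map_add]
        abel }
  have himg : f '' tri A B C = tri S P R := by
    unfold tri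
    rw [AffineMap.image_convexHull]
    congr 1
    simp only [Set.image_insert_eq, Set.image_singleton]
    show ({f A, f B, f C} : Set Pt) = {S, P, R}
    simp only [f, AffineMap.coe_mk]
    rw [fS, fP, fR]
  have hcomp : f '' tri A B C = (fun x => (S - M A) + x) '' (M '' tri A B C) := by
    rw [← Set.image_comp]; rfl
  rw [← himg, hcomp, Set.image_add_left, measure_preimage_add,
    Measure.addHaar_image_linearMap]

lemma key (A B C S P R : Pt) (hABC : AffineIndependent ℝ ![A, B, C]) {p q r s : ℝ}
    (hP : P - S = p • (B - A) + q • (C - A)) (hR : R - S = r • (B - A) + s • (C - A)) :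
    triArea S P R = |p * s - q * r| * triArea A B C := by
  have lin : LinearIndependent ℝ ![B - A, C - A] := (aff_iff_lin A B C).mp hABC
  set bb : Module.Basis (Fin 2) ℝ Pt :=
    basisOfLinearIndependentOfCardEqFinrank lin (by simp) with hbb
  have hbb0 : bb 0 = B - A := by
    rw [hbb, coe_basisOfLinearIndependentOfCardEqFinrank]; rfl
  have hbb1 : bb 1 = C - A := by
    rw [hbb, coe_basisOfLinearIndependentOfCardEqFinrank]; rfl
  set M : Pt →ₗ[ℝ] Pt := bb.constr ℝ ![P - S, R - S] with hM
  have hM0 : M (B - A) = P - S := by rw [← hbb0, hM, Module.Basis.constr_basis]; rfl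
  have hM1 : M (C - A) = R - S := by rw [← hbb1, hM, Module.Basis.constr_basis]; rfl
  have hdet : M.det = p * s - q * r := by
    rw [← LinearMap.det_toMatrix bb, Matrix.det_fin_two]
    have e00 : LinearMap.toMatrix bb bb M 0 0 = p := by
      rw [LinearMap.toMatrix_apply, hbb0, hM0, hP, ← hbb0, ← hbb1]
      simp [Module.Basis.repr_self]
    have e10 : LinearMap.toMatrix bb bb M 1 0 = q := by
      rw [LinearMap.toMatrix_apply, hbb0, hM0, hP, ← hbb0, ← hbb1]
      simp [Module.Basis.repr_self]
    have e01 : LinearMap.toMatrix bb bb M 0 1 = r := by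
      rw [LinearMap.toMatrix_apply, hbb1, hM1, hR, ← hbb0, ← hbb1]
      simp [Module.Basis.repr_self]
    have e11 : LinearMap.toMatrix bb bb M 1 1 = s := by
      rw [LinearMap.toMatrix_apply, hbb1, hM1, hR, ← hbb0, ← hbb1]
      simp [Module.Basis.repr_self]
    rw [e00, e11, e01, e10]; ring
  have hvol := vol_tri_image A B C S P R M hM0.symm hM1.symm
  unfold triArea
  rw [hvol, hdet, ENNReal.toReal_mul, ENNReal.toReal_ofReal (abs_nonneg _)]

lemma key_indep (A B C S P R : Pt) (hABC : AffineIndependent ℝ ![A, B, C]) {p q r s : ℝ}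
    (hP : P - S = p • (B - A) + q • (C - A)) (hR : R - S = r • (B - A) + s • (C - A))
    (hdet : p * s - q * r ≠ 0) : AffineIndependent ℝ ![S, P, R] := by
  rw [aff_iff_lin]
  have lin := (aff_iff_lin A B C).mp hABC
  rw [LinearIndependent.pair_iff] at lin ⊢
  intro x y hxy
  rw [hP, hR] at hxy
  have hxy' : (x * p + y * r) • (B - A) + (x * q + y * s) • (C - A) = 0 := by
    rw [add_smul, add_smul, mul_smul, mul_smul, mul_smul, mul_smul]
    rw [smul_add, smul_add] at hxy
    rw [← hxy]; abel
  obtain ⟨h1, h2⟩ := lin _ _ hxy'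
  constructor
  · have : x * (p * s - q * r) = s * (x * p + y * r) - r * (x * q + y * s) := by ring
    rw [h1, h2] at this; simp at this
    rcases this with h | h
    · exact h
    · exact absurd h hdet
  · have : y * (p * s - q * r) = p * (x * q + y * s) - q * (x * p + y * r) := by ring
    rw [h1, h2] at this; simp at this
    rcases this with h | h
    · exact h
    · exact absurd h hdet

lemma tri_perm {X Y Z X' Y' Z' : Pt} (hs : ({X, Y, Z} : Set Pt) = {X', Y', Z'}) :
    tri X Y Z = tri X' Y' Z' := by unfold tri; rw [hs]

lemma triArea_perm {X Y Z X' Y' Z' : Pt} (hs : ({X, Y, Z} : Set Pt) = {X', Y', Z'}) :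
    triArea X Y Z = triArea X' Y' Z' := by unfold triArea; rw [tri_perm hs]

lemma aff_perm {X Y Z X' Y' Z' : Pt} (hs : ({X, Y, Z} : Set Pt) = {X', Y', Z'})
    (h : AffineIndependent ℝ ![X, Y, Z]) : AffineIndependent ℝ ![X', Y', Z'] := by
  rw [affineIndependent_iff_not_collinear_set] at h ⊢
  rwa [← hs]

lemma vol_tri_lt_top (A B C : Pt) : volume (tri A B C) < ⊤ :=
  ((Set.toFinite _).isCompact_convexHull ℝ).measure_lt_top

lemma area_pos (A B C : Pt) (h : AffineIndependent ℝ ![A, B, C]) :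
    0 < triArea A B C := by
  have hvol : 0 < volume (tri A B C) := by
    apply Measure.measure_pos_of_nonempty_interior (μ := volume)
    unfold tri
    rw [interior_convexHull_nonempty_iff_affineSpan_eq_top]
    have h2 := h.affineSpan_eq_top_iff_card_eq_finrank_add_one.mpr (by simp)
    rwa [show Set.range ![A, B, C] = {A, B, C} by
      simp only [Matrix.range_cons, Matrix.range_empty, Set.union_empty,
        Set.union_singleton]; ext x; simp; tauto] at h2
  exact ENNReal.toReal_pos hvol.ne' (vol_tri_lt_top A B C).ne

/-- Construction 1: at apex `X` with `dist X Y ≤ dist X Z`, extend `XY`. -/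
lemma con1 (X Y Z : Pt) (h : AffineIndependent ℝ ![X, Y, Z]) (hle : dist X Y ≤ dist X Z) :
    ∃ S P R : Pt, IsIsoscelesContainer X Y Z S P R ∧
      triArea S P R = (dist X Z / dist X Y) * triArea X Y Z := by
  have hXY : X ≠ Y := by
    have := h.injective.ne (show (0 : Fin 3) ≠ 1 by decide); simpa using this
  have hXZ : X ≠ Z := by
    have := h.injective.ne (show (0 : Fin 3) ≠ 2 by decide); simpa using this
  have ha : 0 < dist X Y := dist_pos.mpr hXY
  have hb : 0 < dist X Z := dist_pos.mpr hXZ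
  set ρ : ℝ := dist X Z / dist X Y with hρ
  have hρpos : 0 < ρ := by positivity
  have hρ1 : 1 ≤ ρ := (one_le_div ha).mpr hle
  set P : Pt := X + ρ • (Y - X) with hPdef
  have hP : P - X = ρ • (Y - X) + (0 : ℝ) • (Z - X) := by rw [hPdef]; module
  have hR : Z - X = (0 : ℝ) • (Y - X) + (1 : ℝ) • (Z - X) := by module
  have hdet : ρ * 1 - 0 * 0 ≠ 0 := by simpa using hρpos.ne'
  have hXP : dist X P = ρ * dist X Y := by
    have hd : X - P = -(ρ • (Y - X)) := by rw [hPdef]; abel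
    rw [dist_eq_norm, hd, norm_neg, norm_smul, Real.norm_eq_abs, abs_of_pos hρpos,
      ← dist_eq_norm, dist_comm Y X]
  refine ⟨X, P, Z, ⟨key_indep X Y Z X P Z h hP hR hdet, ?_, ?_⟩, ?_⟩
  · right; left
    rw [dist_comm Z X, hXP, hρ, div_mul_cancel₀ _ ha.ne']
  · apply convexHull_min ?_ (convex_convexHull ℝ _)
    refine Set.insert_subset_iff.mpr ⟨subset_convexHull ℝ _ (by simp),
      Set.insert_subset_iff.mpr ⟨?_, Set.singleton_subset_iff.mpr
        (subset_convexHull ℝ _ (by simp))⟩⟩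
    apply segment_subset_convexHull (by simp : X ∈ ({X, P, Z} : Set Pt))
        (by simp : P ∈ ({X, P, Z} : Set Pt))
    refine ⟨1 - 1/ρ, 1/ρ, ?_, by positivity, by ring, ?_⟩
    · have : 1/ρ ≤ 1 := by rw [div_le_one hρpos]; exact hρ1
      linarith
    · have h1 : (1 - 1/ρ) • X + (1/ρ) • (X + ρ • (Y - X)) = X + ((1/ρ) * ρ) • (Y - X) := by
        module
      rw [hPdef, h1, one_div_mul_cancel hρpos.ne', one_smul]
      abel
  · rw [key X Y Z X P Z h hP hR]
    norm_num [abs_of_pos hρpos]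

/-- Construction 2: reflect across the altitude from apex `Z` onto base `XY`;
`t` is the normalized position of the foot, assumed `≥ 1/2`. -/
lemma con2 (X Y Z : Pt) (h : AffineIndependent ℝ ![X, Y, Z]) (t : ℝ)
    (ht : inner ℝ (Z - X) (Y - X) = t * (dist X Y) ^ 2) (hhalf : 1/2 ≤ t) :
    ∃ S P R : Pt, IsIsoscelesContainer X Y Z S P R ∧
      triArea S P R = (2 * t) * triArea X Y Z := by
  have hXY : X ≠ Y := by
    have := h.injective.ne (show (0 : Fin 3) ≠ 1 by decide); simpa using this
  have hc : 0 < dist X Y := dist_pos.mpr hXY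
  have htpos : 0 < t := by linarith
  have hnorm : ‖Y - X‖ = dist X Y := by rw [← dist_eq_norm, dist_comm Y X]
  set P : Pt := X + (2 * t) • (Y - X) with hPdef
  have hP : P - X = (2 * t) • (Y - X) + (0 : ℝ) • (Z - X) := by rw [hPdef]; module
  have hR : Z - X = (0 : ℝ) • (Y - X) + (1 : ℝ) • (Z - X) := by module
  have hdet : 2 * t * 1 - 0 * 0 ≠ 0 := by simpa using (by positivity : (0:ℝ) < 2 * t).ne'
  set u : Pt := t • (Y - X) with hudef
  set w : Pt := (Z - X) - u with hwdef
  have horth : inner ℝ u w = (0 : ℝ) := by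
    have h2 : (inner ℝ (Y - X) (Z - X) : ℝ) = t * dist X Y ^ 2 := by
      rw [real_inner_comm]; exact ht
    rw [hudef, hwdef, real_inner_smul_left, inner_sub_right, real_inner_smul_right, h2,
      real_inner_self_eq_norm_sq, hnorm]
    ring
  refine ⟨X, P, Z, ⟨key_indep X Y Z X P Z h hP hR hdet, ?_, ?_⟩, ?_⟩
  · -- isosceles: dist P Z = dist Z X
    left
    have hPZ : P - Z = u - w := by rw [hPdef, hudef, hwdef]; module
    have hZX : Z - X = u + w := by rw [hwdef]; abel
    have hsq : ‖u - w‖ ^ 2 = ‖u + w‖ ^ 2 := by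
      rw [norm_sub_sq_real, norm_add_sq_real, horth]; ring
    have hnx : ‖u - w‖ = ‖u + w‖ := by
      calc ‖u - w‖ = Real.sqrt (‖u - w‖ ^ 2) := (Real.sqrt_sq (norm_nonneg _)).symm
        _ = Real.sqrt (‖u + w‖ ^ 2) := by rw [hsq]
        _ = ‖u + w‖ := Real.sqrt_sq (norm_nonneg _)
    rw [dist_eq_norm, dist_eq_norm, hPZ, hnx, ← hZX]
  · apply convexHull_min ?_ (convex_convexHull ℝ _)
    refine Set.insert_subset_iff.mpr ⟨subset_convexHull ℝ _ (by simp),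
      Set.insert_subset_iff.mpr ⟨?_, Set.singleton_subset_iff.mpr
        (subset_convexHull ℝ _ (by simp))⟩⟩
    apply segment_subset_convexHull (by simp : X ∈ ({X, P, Z} : Set Pt))
        (by simp : P ∈ ({X, P, Z} : Set Pt))
    have h2t : 0 < 2 * t := by positivity
    refine ⟨1 - 1/(2*t), 1/(2*t), ?_, by positivity, by ring, ?_⟩
    · have : 1/(2*t) ≤ 1 := by rw [div_le_one h2t]; linarith
      linarith
    · have h1 : (1 - 1/(2*t)) • X + (1/(2*t)) • (X + (2*t) • (Y - X))
          = X + ((1/(2*t)) * (2*t)) • (Y - X) := by module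
      rw [hPdef, h1, one_div_mul_cancel h2t.ne', one_smul]
      abel
  · rw [key X Y Z X P Z h hP hR]
    norm_num [abs_of_pos (by positivity : (0:ℝ) < 2 * t)]

lemma transfer {A B C X Y Z : Pt} (hs : ({X, Y, Z} : Set Pt) = {A, B, C})
    (hex : ∃ S P R : Pt, IsIsoscelesContainer X Y Z S P R ∧
      triArea S P R < Real.sqrt 2 * triArea X Y Z) :
    ∃ S P R : Pt, IsIsoscelesContainer A B C S P R ∧
      triArea S P R < Real.sqrt 2 * triArea A B C := by
  obtain ⟨S, P, R, ⟨hi, hiso, hsub⟩, harea⟩ := hex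
  exact ⟨S, P, R,
    ⟨hi, hiso, by rw [show tri A B C = tri X Y Z from (tri_perm hs).symm]; exact hsub⟩,
    by rw [show triArea A B C = triArea X Y Z from (triArea_perm hs).symm]; exact harea⟩

set_option maxHeartbeats 1000000 in
lemma main (X Y Z : Pt) (h : AffineIndependent ℝ ![X, Y, Z])
    (h1 : dist Y Z ≤ dist X Z) (h2 : dist X Z ≤ dist X Y) :
    ∃ S P R : Pt, IsIsoscelesContainer X Y Z S P R ∧
      triArea S P R < Real.sqrt 2 * triArea X Y Z := by
  have hXY : X ≠ Y := by
    have := h.injective.ne (show (0 : Fin 3) ≠ 1 by decide); simpa using this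
  have hXZ : X ≠ Z := by
    have := h.injective.ne (show (0 : Fin 3) ≠ 2 by decide); simpa using this
  have hYZ : Y ≠ Z := by
    have := h.injective.ne (show (1 : Fin 3) ≠ 2 by decide); simpa using this
  have apos : 0 < dist Y Z := dist_pos.mpr hYZ
  have bpos : 0 < dist X Z := dist_pos.mpr hXZ
  have cpos : 0 < dist X Y := dist_pos.mpr hXY
  have s2 : Real.sqrt 2 ^ 2 = 2 := Real.sq_sqrt (by norm_num)
  have s2nonneg : 0 ≤ Real.sqrt 2 := Real.sqrt_nonneg 2
  have s2gt1 : 1 < Real.sqrt 2 := by nlinarith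
  have areapos : 0 < triArea X Y Z := area_pos X Y Z h
  by_cases hc1 : dist X Z < Real.sqrt 2 * dist Y Z
  · -- extend at apex Z
    have hs : ({Z, Y, X} : Set Pt) = {X, Y, Z} := by ext; simp; tauto
    have h' : AffineIndependent ℝ ![Z, Y, X] := aff_perm hs.symm h
    obtain ⟨S, P, R, hcont, harea⟩ := con1 Z Y X h'
      (by rw [dist_comm Z Y, dist_comm Z X]; exact h1)
    rw [dist_comm Z X, dist_comm Z Y, triArea_perm hs] at harea
    refine transfer hs ⟨S, P, R, ?_, ?_⟩
    · exact hcont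
    · rw [harea, triArea_perm hs]
      apply mul_lt_mul_of_pos_right _ areapos
      rw [div_lt_iff₀ apos]; exact hc1
  by_cases hc2 : dist X Y < Real.sqrt 2 * dist X Z
  · -- extend at apex X
    have hs : ({X, Z, Y} : Set Pt) = {X, Y, Z} := by ext; simp; tauto
    have h' : AffineIndependent ℝ ![X, Z, Y] := aff_perm hs.symm h
    obtain ⟨S, P, R, hcont, harea⟩ := con1 X Z Y h' h2
    rw [triArea_perm hs] at harea
    refine transfer hs ⟨S, P, R, ?_, ?_⟩
    · exact hcont
    · rw [harea, triArea_perm hs]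
      apply mul_lt_mul_of_pos_right _ areapos
      rw [div_lt_iff₀ bpos]; exact hc2
  -- reflection construction
  push_neg at hc1 hc2
  have hb' : ‖Z - X‖ = dist X Z := by rw [← dist_eq_norm, dist_comm]
  have hc' : ‖Y - X‖ = dist X Y := by rw [← dist_eq_norm, dist_comm]
  have ha' : ‖Z - Y‖ = dist Y Z := by rw [← dist_eq_norm, dist_comm]
  have htri : dist X Y < dist X Z + dist Y Z := by
    rcases lt_or_eq_of_le (dist_triangle X Z Y) with hlt | heq
    · rw [dist_comm Z Y] at hlt; exact hlt
    · exfalso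
      have hw : Wbtw ℝ X Z Y := dist_add_dist_eq_iff.mp heq.symm
      have hcol := hw.collinear
      have h' : AffineIndependent ℝ ![X, Z, Y] :=
        aff_perm (show ({X, Y, Z} : Set Pt) = {X, Z, Y} by ext; simp; tauto) h
      exact (affineIndependent_iff_not_collinear_set.mp h') hcol
  have hinner : inner ℝ (Z - X) (Y - X) =
      (dist X Z ^ 2 + dist X Y ^ 2 - dist Y Z ^ 2) / 2 := by
    have hexp := norm_sub_sq_real (Z - X) (Y - X)
    rw [show (Z - X) - (Y - X) = Z - Y by abel, ha', hb', hc'] at hexp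
    linarith
  set a := dist Y Z
  set b := dist X Z
  set c := dist X Y
  set t : ℝ := (b ^ 2 + c ^ 2 - a ^ 2) / (2 * c ^ 2) with htdef
  have ht : inner ℝ (Z - X) (Y - X) = t * c ^ 2 := by
    rw [hinner, htdef]; field_simp
  have hprod : 0 < (a + b - c) * (a + c - b) := by
    apply mul_pos (by linarith)
    have hble : b ≤ Real.sqrt 2 * b := le_mul_of_one_le_left bpos.le s2gt1.le
    linarith
  have hbc : Real.sqrt 2 * b * c ≤ c * c := mul_le_mul_of_nonneg_right hc2 cpos.le
  have htub : 2 * t < Real.sqrt 2 := by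
    have h2t : 2 * t = (b ^ 2 + c ^ 2 - a ^ 2) / c ^ 2 := by
      rw [htdef]; field_simp
    rw [h2t, div_lt_iff₀ (by positivity)]
    nlinarith [hprod, hbc, s2, mul_le_mul_of_nonneg_left hbc s2nonneg]
  have htlb : 2 * (1 - t) < Real.sqrt 2 := by
    have h2t : 2 * (1 - t) = (a ^ 2 + c ^ 2 - b ^ 2) / c ^ 2 := by
      rw [htdef]; field_simp; ring
    rw [h2t, div_lt_iff₀ (by positivity)]
    nlinarith [s2, mul_self_le_mul_self apos.le h1]
  by_cases hhalf : 1/2 ≤ t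
  · obtain ⟨S, P, R, hcont, harea⟩ := con2 X Y Z h t ht hhalf
    exact ⟨S, P, R, hcont, by rw [harea]; exact mul_lt_mul_of_pos_right htub areapos⟩
  · push_neg at hhalf
    have hs : ({Y, X, Z} : Set Pt) = {X, Y, Z} := by ext; simp; tauto
    have h' : AffineIndependent ℝ ![Y, X, Z] := aff_perm hs.symm h
    have ht' : inner ℝ (Z - Y) (X - Y) = (1 - t) * (dist Y X) ^ 2 := by
      rw [show Z - Y = (Z - X) - (Y - X) by abel, show X - Y = -(Y - X) by abel,
        inner_neg_right, inner_sub_left, ht, real_inner_self_eq_norm_sq, hc',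
        dist_comm Y X]
      ring
    obtain ⟨S, P, R, hcont, harea⟩ := con2 Y X Z h' (1 - t) ht' (by linarith)
    rw [triArea_perm hs] at harea
    refine transfer hs ⟨S, P, R, hcont, ?_⟩
    rw [harea, triArea_perm hs]
    exact mul_lt_mul_of_pos_right htlb areapos

/-- every triangle `A B C` has an isosceles container whose area
is strictly smaller than `√2 · t(ABC)`. -/
theorem statement6 (A B C : Pt)
    (hABC : AffineIndependent ℝ ![A, B, C]) :
    ∃ S P R : Pt, IsIsoscelesContainer A B C S P R ∧
      triArea S P R < Real.sqrt 2 * triArea A B C := by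
  rcases le_total (dist B C) (dist A C) with h12 | h21 <;>
    rcases le_total (dist A C) (dist A B) with h23 | h32 <;>
      rcases le_total (dist B C) (dist A B) with h13 | h31
  · exact main A B C hABC h12 h23
  · exact main A B C hABC h12 h23
  · refine transfer (show ({A, C, B} : Set Pt) = {A, B, C} by ext; simp; tauto) ?_
    exact main A C B (aff_perm (by ext; simp; tauto) hABC)
      (by rw [dist_comm C B]; exact h13) h32
  · refine transfer (show ({C, A, B} : Set Pt) = {A, B, C} by ext; simp; tauto) ?_
    exact main C A B (aff_perm (by ext; simp; tauto) hABC)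
      (by rw [dist_comm C B]; exact h31) (by rw [dist_comm C B, dist_comm C A]; exact h12)
  · refine transfer (show ({B, A, C} : Set Pt) = {A, B, C} by ext; simp; tauto) ?_
    exact main B A C (aff_perm (by ext; simp; tauto) hABC)
      h21 (by rw [dist_comm B A]; exact h13)
  · refine transfer (show ({B, C, A} : Set Pt) = {A, B, C} by ext; simp; tauto) ?_
    exact main B C A (aff_perm (by ext; simp; tauto) hABC)
      (by rw [dist_comm C A, dist_comm B A]; exact h23) (by rw [dist_comm B A]; exact h31)
  · refine transfer (show ({C, B, A} : Set Pt) = {A, B, C} by ext; simp; tauto) ?_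
    exact main C B A (aff_perm (by ext; simp; tauto) hABC)
      (by rw [dist_comm B A, dist_comm C A]; exact h32) (by rw [dist_comm C A, dist_comm C B]; exact h21)
  · refine transfer (show ({C, B, A} : Set Pt) = {A, B, C} by ext; simp; tauto) ?_
    exact main C B A (aff_perm (by ext; simp; tauto) hABC)
      (by rw [dist_comm B A, dist_comm C A]; exact h32) (by rw [dist_comm C A, dist_comm C B]; exact h21)

end
end

section
/- For every triangle ABC with side lengths a < b < c, min( t(AB'C), t(ABC') ) < ((1+√5)/2) · t(ABC); that is, ABC has a special container of the first kind whose area is strictly smaller than the golden ratio times the area of ABC. -/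
open EuclideanGeometry MeasureTheory Real
open Pointwise

noncomputable section

/-- Scaling one vertex of a triangle along a ray from another vertex scales the
area of its convex hull by the scaling factor. -/
lemma vol_scale (P Q R W : Pt) (h : ¬ Collinear ℝ ({P, Q, R} : Set Pt))
    {r : ℝ} (hr : 0 ≤ r) (hW : W - P = r • (Q - P)) :
    volume (convexHull ℝ ({P, W, R} : Set Pt)) =
      ENNReal.ofReal r * volume (convexHull ℝ ({P, Q, R} : Set Pt)) := by
  have hli : LinearIndependent ℝ ![Q - P, R - P] := by
    rw [linearIndependent_fin2]
    refine ⟨?_, ?_⟩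
    · show R - P ≠ 0
      intro h0
      have hRP : R = P := sub_eq_zero.mp h0
      apply h
      rw [hRP]
      have : ({P, Q, P} : Set Pt) = {P, Q} := by ext x; simp; tauto
      rw [this]
      exact collinear_pair ℝ P Q
    · intro a ha
      simp only [Matrix.cons_val_one, Matrix.head_cons, Matrix.cons_val_zero] at ha
      apply h
      rw [collinear_iff_of_mem (Set.mem_insert P {Q, R})]
      refine ⟨R - P, fun p hp => ?_⟩
      simp only [Set.mem_insert_iff, Set.mem_singleton_iff] at hp
      rcases hp with rfl | rfl | rfl
      · exact ⟨0, by simp⟩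
      · refine ⟨a, ?_⟩
        show p = a • (R - P) +ᵥ P
        rw [ha]
        simp only [vadd_eq_add]
        abel
      · exact ⟨1, by simp only [one_smul, vadd_eq_add]; abel⟩
  have hcard : Fintype.card (Fin 2) = Module.finrank ℝ Pt := by
    simp [finrank_euclideanSpace_fin]
  let b : Module.Basis (Fin 2) ℝ Pt := basisOfLinearIndependentOfCardEqFinrank hli hcard
  have hb : ⇑b = ![Q - P, R - P] := coe_basisOfLinearIndependentOfCardEqFinrank hli hcard
  have hb0 : b 0 = Q - P := by rw [hb]; rfl
  have hb1 : b 1 = R - P := by rw [hb]; rfl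
  set M : Pt →ₗ[ℝ] Pt := b.constr ℝ ![r • (Q - P), R - P] with hMdef
  have hM0 : M (Q - P) = r • (Q - P) := by
    have := b.constr_basis ℝ ![r • (Q - P), R - P] 0
    rwa [hb0] at this
  have hM1 : M (R - P) = R - P := by
    have := b.constr_basis ℝ ![r • (Q - P), R - P] 1
    rwa [hb1] at this
  have hMb0 : M (b 0) = r • b 0 := by rw [hb0, hM0]
  have hMb1 : M (b 1) = b 1 := by rw [hb1, hM1]
  have hdet : LinearMap.det M = r := by
    have hmat : LinearMap.toMatrix b b M = !![r, 0; 0, 1] := by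
      ext i j
      rw [LinearMap.toMatrix_apply]
      fin_cases i <;> fin_cases j <;>
        simp only [Fin.zero_eta, Fin.mk_one, Fin.isValue, Matrix.cons_val_zero,
          Matrix.cons_val_one, Matrix.head_cons, Matrix.cons_val', Matrix.empty_val',
          Matrix.cons_val_fin_one, Matrix.of_apply, hMb0, hMb1, _root_.map_smul,
          Module.Basis.repr_self, Finsupp.smul_apply, Finsupp.single_apply, smul_eq_mul] <;>
        norm_num
    rw [← LinearMap.det_toMatrix b, hmat, Matrix.det_fin_two_of]
    ring
  set F : Pt →ᵃ[ℝ] Pt :=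
    { toFun := fun x => M (x - P) + P
      linear := M
      map_vadd' := by
        intro p v
        show M (v + p - P) + P = M v + (M (p - P) + P)
        rw [show v + p - P = v + (p - P) by abel, map_add]
        abel } with hF
  have hFP : F P = P := by show M (P - P) + P = P; simp
  have hFQ : F Q = W := by
    show M (Q - P) + P = W
    rw [hM0, ← hW]; abel
  have hFR : F R = R := by show M (R - P) + P = R; rw [hM1]; abel
  have himg : (convexHull ℝ ({P, W, R} : Set Pt)) = ⇑F '' convexHull ℝ ({P, Q, R} : Set Pt) := by
    rw [AffineMap.image_convexHull]
    congr 1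
    rw [Set.image_insert_eq, Set.image_insert_eq, Set.image_singleton, hFP, hFQ, hFR]
  rw [himg]
  set s := convexHull ℝ ({P, Q, R} : Set Pt)
  have h1 : ⇑F '' s = P +ᵥ (⇑M '' ((-P) +ᵥ s)) := by
    rw [← Set.image_vadd, ← Set.image_vadd, Set.image_image, Set.image_image]
    apply Set.image_congr'
    intro x
    show M (x - P) + P = P +ᵥ M (-P +ᵥ x)
    simp only [vadd_eq_add]
    rw [show -P + x = x - P by abel]
    abel
  rw [h1, measure_vadd, Measure.addHaar_image_linearMap, measure_vadd, hdet, abs_of_nonneg hr]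

/-- Pure-real golden ratio arithmetic. -/
lemma golden_key (a b c : ℝ) (ha : 0 < a) (hb : 0 < b) (htri : c < b + a) :
    b / a < (1 + Real.sqrt 5) / 2 ∨ c / b < (1 + Real.sqrt 5) / 2 := by
  obtain ⟨φ, hφdef⟩ : ∃ φ : ℝ, φ = (1 + Real.sqrt 5) / 2 := ⟨_, rfl⟩
  rw [← hφdef]
  have h5 : Real.sqrt 5 * Real.sqrt 5 = 5 := Real.mul_self_sqrt (by norm_num)
  have hφ2 : φ * φ = φ + 1 := by rw [hφdef]; nlinarith [h5]
  have hφ1 : 1 < φ := by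
    rw [hφdef]
    nlinarith [h5, Real.sqrt_nonneg 5]
  by_cases hcase : b / a < φ
  · exact Or.inl hcase
  · push_neg at hcase
    right
    have hba : φ * a ≤ b := by
      calc φ * a ≤ (b / a) * a := mul_le_mul_of_nonneg_right hcase ha.le
      _ = b := div_mul_cancel₀ b (ne_of_gt ha)
    have e1 : (φ - 1) * (b - φ * a) ≥ 0 :=
      mul_nonneg (by linarith) (by linarith)
    have e2 : φ * φ * a = (φ + 1) * a := by rw [hφ2]
    have key : a + b ≤ φ * b := by nlinarith [e1, e2]
    have hcb : c < φ * b := by linarith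
    rw [div_lt_iff₀ hb]
    exact hcb

/-- for a triangle `A B C` with side lengths `a < b < c`,
`min (t(AB'C), t(ABC')) < ((1 + √5)/2) · t(ABC)`: there is a special
container of the first kind of area less than the golden ratio times
the area of `A B C`. -/
theorem statement8 (A B C B' C' : Pt)
    (hABC : AffineIndependent ℝ ![A, B, C])
    (hab : dist B C < dist C A) (hbc : dist C A < dist A B)
    (hB'ray : OnRay C B B') (hB'dist : dist C B' = dist C A)
    (hC'ray : OnRay A C C') (hC'dist : dist A C' = dist A B) :
    min (triArea A B' C) (triArea A B C') <
      (1 + Real.sqrt 5) / 2 * triArea A B C := by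
  have hnc : ¬ Collinear ℝ ({A, B, C} : Set Pt) := by
    rw [← affineIndependent_iff_not_collinear_set]
    exact hABC
  set a := dist B C with hadef
  set b := dist C A with hbdef
  set c := dist A B with hcdef
  -- positivity of side lengths
  have ha : 0 < a := by
    rw [hadef, dist_pos]
    intro hBC
    apply hnc
    rw [hBC]
    have : ({A, C, C} : Set Pt) = {A, C} := by simp
    rw [this]
    exact collinear_pair ℝ A C
  have hb : 0 < b := lt_trans ha hab
  have hc : 0 < c := lt_trans hb hbc
  -- B' - C = (b/a) • (B - C)
  have hB'eq : B' - C = (b / a) • (B - C) := by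
    have h1 : ‖B - C‖ • (B' - C) = ‖B' - C‖ • (B - C) := hB'ray.norm_smul_eq
    have h2 : ‖B - C‖ = a := (dist_eq_norm B C).symm
    have h3 : ‖B' - C‖ = b := by
      rw [← dist_eq_norm, dist_comm, hB'dist]
    rw [h2, h3] at h1
    have ha' : a ≠ 0 := ne_of_gt ha
    calc B' - C = (a⁻¹ * a) • (B' - C) := by rw [inv_mul_cancel₀ ha', one_smul]
    _ = a⁻¹ • (a • (B' - C)) := by rw [smul_smul]
    _ = a⁻¹ • (b • (B - C)) := by rw [h1]
    _ = (b / a) • (B - C) := by rw [smul_smul, div_eq_inv_mul]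
  -- C' - A = (c/b) • (C - A)
  have hC'eq : C' - A = (c / b) • (C - A) := by
    have h1 : ‖C - A‖ • (C' - A) = ‖C' - A‖ • (C - A) := hC'ray.norm_smul_eq
    have h2 : ‖C - A‖ = b := by rw [← dist_eq_norm, hbdef]
    have h3 : ‖C' - A‖ = c := by rw [← dist_eq_norm, dist_comm, hC'dist]
    rw [h2, h3] at h1
    have hb' : b ≠ 0 := ne_of_gt hb
    calc C' - A = (b⁻¹ * b) • (C' - A) := by rw [inv_mul_cancel₀ hb', one_smul]
    _ = b⁻¹ • (b • (C' - A)) := by rw [smul_smul]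
    _ = b⁻¹ • (c • (C - A)) := by rw [h1]
    _ = (c / b) • (C - A) := by rw [smul_smul, div_eq_inv_mul]
  -- set reorderings
  have hsCBA : ({C, B, A} : Set Pt) = {A, B, C} := by ext x; simp; tauto
  have hsACB : ({A, C, B} : Set Pt) = {A, B, C} := by ext x; simp; tauto
  have hsAB'C : ({A, B', C} : Set Pt) = {C, B', A} := by ext x; simp; tauto
  have hsABC' : ({A, B, C'} : Set Pt) = {A, C', B} := by ext x; simp; tauto
  have hncCBA : ¬ Collinear ℝ ({C, B, A} : Set Pt) := by rw [hsCBA]; exact hnc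
  have hncACB : ¬ Collinear ℝ ({A, C, B} : Set Pt) := by rw [hsACB]; exact hnc
  -- volume computations
  have hv1 := vol_scale C B A B' hncCBA (div_nonneg hb.le ha.le) hB'eq
  have hv2 := vol_scale A C B C' hncACB (div_nonneg hc.le hb.le) hC'eq
  rw [hsCBA] at hv1
  rw [hsACB] at hv2
  -- volume of the base triangle is positive and finite
  have hspan : affineSpan ℝ ({A, B, C} : Set Pt) = ⊤ := by
    have hr : Set.range ![A, B, C] = {A, B, C} := by
      ext x
      simp [Fin.exists_fin_succ, Matrix.cons_val_zero, Matrix.cons_val_one]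
      tauto
    rw [← hr]
    exact hABC.affineSpan_eq_top_iff_card_eq_finrank_add_one.mpr
      (by simp [finrank_euclideanSpace_fin])
  have hint : (interior (convexHull ℝ ({A, B, C} : Set Pt))).Nonempty :=
    interior_convexHull_nonempty_iff_affineSpan_eq_top.mpr hspan
  have hpos : 0 < volume (tri A B C) :=
    lt_of_lt_of_le (isOpen_interior.measure_pos volume hint)
      (measure_mono interior_subset)
  have hfin : volume (tri A B C) < ⊤ := by
    have hfinset : ({A, B, C} : Set Pt).Finite :=
      (Set.finite_singleton C).insert B |>.insert A
    exact (hfinset.isCompact_convexHull (𝕜 := ℝ)).measure_lt_top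
  have ht : 0 < triArea A B C := ENNReal.toReal_pos hpos.ne' hfin.ne
  -- area formulas
  have hA1 : triArea A B' C = (b / a) * triArea A B C := by
    unfold triArea tri
    rw [hsAB'C, hv1, ENNReal.toReal_mul, ENNReal.toReal_ofReal (div_nonneg hb.le ha.le)]
  have hA2 : triArea A B C' = (c / b) * triArea A B C := by
    unfold triArea tri
    rw [hsABC', hv2, ENNReal.toReal_mul, ENNReal.toReal_ofReal (div_nonneg hc.le hb.le)]
  -- strict triangle inequality
  have htri : c < b + a := by
    have h' : c ≤ b + a := by
      rw [hcdef, hbdef, hadef, dist_comm C A, dist_comm B C]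
      exact dist_triangle A C B
    rcases lt_or_eq_of_le h' with h | h
    · exact h
    · exfalso
      have heq : dist A C + dist C B = dist A B := by
        rw [dist_comm A C, dist_comm C B, ← hadef, ← hbdef, ← hcdef]
        linarith [h]
      have hw : Wbtw ℝ A C B := dist_add_dist_eq_iff.mp heq
      apply hnc
      have := hw.collinear
      have hs : ({A, C, B} : Set Pt) = {A, B, C} := by ext x; simp; tauto
      rwa [hs] at this
  -- golden ratio arithmetic
  rcases golden_key a b c ha hb htri with hcase | hcase
  · refine lt_of_le_of_lt (min_le_left _ _) ?_
    rw [hA1]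
    exact mul_lt_mul_of_pos_right hcase ht
  · refine lt_of_le_of_lt (min_le_right _ _) ?_
    rw [hA2]
    exact mul_lt_mul_of_pos_right hcase ht
end
end

section
/- The constant (1+√5)/2 is best possible: for every ε > 0 there exists a triangle ABC with side lengths a < b < c such that each of the three special containers of the first kind has area strictly greater than ((1+√5)/2 − ε) · t(ABC), i.e. t(AB'C) > ((1+√5)/2 − ε)·t(ABC), t(ABC') > ((1+√5)/2 − ε)·t(ABC), and t(ABC'') > ((1+√5)/2 − ε)·t(ABC). -/
open EuclideanGeometry MeasureTheory Real

noncomputable section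

/-! ### Auxiliary machinery -/

/-- The point of the Euclidean plane with coordinates `(x, y)`. -/
def pt (x y : ℝ) : Pt := (WithLp.equiv 2 (Fin 2 → ℝ)).symm ![x, y]

lemma sub_pt (x1 y1 x2 y2 : ℝ) : pt x1 y1 - pt x2 y2 = pt (x1-x2) (y1-y2) := by
  ext i; fin_cases i <;> rfl

lemma smul_pt (r x y : ℝ) : r • pt x y = pt (r*x) (r*y) := by
  ext i; fin_cases i <;> rfl

lemma add_pt (x1 y1 x2 y2 : ℝ) : pt x1 y1 + pt x2 y2 = pt (x1+x2) (y1+y2) := by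
  ext i; fin_cases i <;> rfl

lemma dist_pt (x1 y1 x2 y2 : ℝ) :
    dist (pt x1 y1) (pt x2 y2) = Real.sqrt ((x1-x2)^2 + (y1-y2)^2) := by
  rw [EuclideanSpace.dist_eq]
  simp [Fin.sum_univ_two, pt, Real.dist_eq, sq_abs]

/-- The area of the standard triangle. -/
def Ktri : ℝ := triArea (pt 0 0) (pt 1 0) (pt 0 1)

lemma toEuclideanLin_pt (M : Matrix (Fin 2) (Fin 2) ℝ) (p q : ℝ) :
    Matrix.toEuclideanLin M (pt p q) =
      pt (M 0 0 * p + M 0 1 * q) (M 1 0 * p + M 1 1 * q) := by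
  show Matrix.toEuclideanLin M ((WithLp.equiv 2 (Fin 2 → ℝ)).symm ![p,q]) = _
  rw [WithLp.equiv_symm_apply, Matrix.toEuclideanLin_apply_piLp_toLp]
  unfold pt
  rw [WithLp.equiv_symm_apply]
  congr 1
  funext i
  fin_cases i <;> simp [Matrix.mulVec, dotProduct, Fin.sum_univ_two]

/-- The area of a triangle in coordinates. -/
lemma triArea_pt (x1 y1 x2 y2 x3 y3 : ℝ) :
    triArea (pt x1 y1) (pt x2 y2) (pt x3 y3) =
      |(x2-x1)*(y3-y1) - (x3-x1)*(y2-y1)| * Ktri := by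
  set M : Matrix (Fin 2) (Fin 2) ℝ := !![x2-x1, x3-x1; y2-y1, y3-y1] with hM
  set L := Matrix.toEuclideanLin M with hL
  set a : Pt := pt x1 y1 with ha
  have hfa : ∀ v : Pt, a + L v = L (v - 0) +ᵥ (a + L 0) := by
    intro v; simp [map_zero]; abel
  set f : Pt →ᵃ[ℝ] Pt := AffineMap.mk' (fun v => a + L v) L 0 hfa with hf
  have happ : ∀ p q : ℝ, f (pt p q) =
      pt (x1 + ((x2-x1) * p + (x3-x1) * q)) (y1 + ((y2-y1) * p + (y3-y1) * q)) := by
    intro p q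
    show a + L (pt p q) = _
    rw [hL, toEuclideanLin_pt, ha, add_pt]
    simp [hM]
  have himg : tri (pt x1 y1) (pt x2 y2) (pt x3 y3)
      = f '' tri (pt 0 0) (pt 1 0) (pt 0 1) := by
    rw [tri, tri, AffineMap.image_convexHull]
    congr 1
    rw [Set.image_insert_eq, Set.image_insert_eq, Set.image_singleton,
      happ, happ, happ]
    norm_num
  have hdet : LinearMap.det L = (x2-x1)*(y3-y1) - (x3-x1)*(y2-y1) := by
    rw [hL, Matrix.toEuclideanLin_eq_toLin, LinearMap.det_toLin, hM,
      Matrix.det_fin_two_of]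
  have hvol : volume (f '' tri (pt 0 0) (pt 1 0) (pt 0 1))
      = ENNReal.ofReal |(x2-x1)*(y3-y1) - (x3-x1)*(y2-y1)|
          * volume (tri (pt 0 0) (pt 1 0) (pt 0 1)) := by
    have hcoe : ⇑f = (fun w => a + w) ∘ ⇑L := by
      funext v; rfl
    rw [hcoe, Set.image_comp]
    have him : (fun w => a + w) '' (⇑L '' tri (pt 0 0) (pt 1 0) (pt 0 1))
        = (fun w => -a + w) ⁻¹' (⇑L '' tri (pt 0 0) (pt 1 0) (pt 0 1)) := by
      rw [Set.image_add_left]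
    rw [him, measure_preimage_add, Measure.addHaar_image_linearMap, hdet]
  rw [triArea, himg, hvol, ENNReal.toReal_mul,
    ENNReal.toReal_ofReal (abs_nonneg _)]
  rfl

lemma span_top : affineSpan ℝ ({pt 0 0, pt 1 0, pt 0 1} : Set Pt) = ⊤ := by
  rw [eq_top_iff]
  intro p _
  have h0 : pt 0 0 ∈ affineSpan ℝ ({pt 0 0, pt 1 0, pt 0 1} : Set Pt) :=
    subset_affineSpan _ _ (by simp)
  have h1 : pt 1 0 ∈ affineSpan ℝ ({pt 0 0, pt 1 0, pt 0 1} : Set Pt) :=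
    subset_affineSpan _ _ (by simp)
  have h2 : pt 0 1 ∈ affineSpan ℝ ({pt 0 0, pt 1 0, pt 0 1} : Set Pt) :=
    subset_affineSpan _ _ (by simp)
  have hv : (p 0) • (pt 1 0 -ᵥ pt 0 0) + (p 1) • (pt 0 1 -ᵥ pt 0 0)
      ∈ (affineSpan ℝ ({pt 0 0, pt 1 0, pt 0 1} : Set Pt)).direction :=
    Submodule.add_mem _
      (Submodule.smul_mem _ _ (AffineSubspace.vsub_mem_direction h1 h0))
      (Submodule.smul_mem _ _ (AffineSubspace.vsub_mem_direction h2 h0))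
  have hmem := AffineSubspace.vadd_mem_of_mem_direction hv h0
  convert hmem using 1
  ext i
  fin_cases i <;>
    simp [pt, PiLp.add_apply, PiLp.smul_apply, PiLp.sub_apply]

lemma Ktri_pos : 0 < Ktri := by
  have hne : (interior (tri (pt 0 0) (pt 1 0) (pt 0 1))).Nonempty := by
    rw [tri, interior_convexHull_nonempty_iff_affineSpan_eq_top]
    exact span_top
  have hpos : 0 < volume (tri (pt 0 0) (pt 1 0) (pt 0 1)) :=
    volume.measure_pos_of_nonempty_interior hne
  exact ENNReal.toReal_pos hpos.ne' (vol_tri_lt_top _ _ _).ne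

lemma aff_ind_pt (x1 y1 x2 y2 x3 y3 : ℝ)
    (h : (x2-x1)*(y3-y1) - (x3-x1)*(y2-y1) ≠ 0) :
    AffineIndependent ℝ ![pt x1 y1, pt x2 y2, pt x3 y3] := by
  rw [affineIndependent_iff_not_collinear_set]
  intro hc
  rw [collinear_iff_of_mem (Set.mem_insert _ _)] at hc
  obtain ⟨v, hv⟩ := hc
  obtain ⟨r2, hr2⟩ := hv (pt x2 y2) (by simp)
  obtain ⟨r3, hr3⟩ := hv (pt x3 y3) (by simp)
  have e2x : x2 = r2 * v 0 + x1 := by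
    have := congrArg (fun w : Pt => w 0) hr2; simpa [pt, PiLp.add_apply, PiLp.smul_apply] using this
  have e2y : y2 = r2 * v 1 + y1 := by
    have := congrArg (fun w : Pt => w 1) hr2; simpa [pt, PiLp.add_apply, PiLp.smul_apply] using this
  have e3x : x3 = r3 * v 0 + x1 := by
    have := congrArg (fun w : Pt => w 0) hr3; simpa [pt, PiLp.add_apply, PiLp.smul_apply] using this
  have e3y : y3 = r3 * v 1 + y1 := by
    have := congrArg (fun w : Pt => w 1) hr3; simpa [pt, PiLp.add_apply, PiLp.smul_apply] using this
  apply h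
  rw [e2x, e2y, e3x, e3y]; ring

set_option maxHeartbeats 2000000 in
/-- the constant `(1 + √5)/2` is best possible: for every `ε > 0`
there is a triangle `A B C` with side lengths `a < b < c` such that each of its
three special containers of the first kind `AB'C`, `ABC'`, `ABC''` has area
strictly greater than `((1 + √5)/2 - ε) · t(ABC)`. -/
theorem statement9 (ε : ℝ) (hε : 0 < ε) :
    ∃ A B C B' C' C'' : Pt, AffineIndependent ℝ ![A, B, C] ∧
      dist B C < dist C A ∧ dist C A < dist A B ∧
      OnRay C B B' ∧ dist C B' = dist C A ∧
      OnRay A C C' ∧ dist A C' = dist A B ∧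
      OnRay B C C'' ∧ dist B C'' = dist A B ∧
      ((1 + Real.sqrt 5) / 2 - ε) * triArea A B C < triArea A B' C ∧
      ((1 + Real.sqrt 5) / 2 - ε) * triArea A B C < triArea A B C' ∧
      ((1 + Real.sqrt 5) / 2 - ε) * triArea A B C < triArea A B C'' := by
  set s := Real.sqrt 5 with hsdef
  have hs0 : 0 ≤ s := Real.sqrt_nonneg 5
  have hs : s^2 = 5 := Real.sq_sqrt (by norm_num)
  have hs2 : 2 ≤ s := by nlinarith [sq_nonneg (s - 2)]
  set φ := (1 + s) / 2 with hφdef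
  have hφ32 : (3:ℝ)/2 ≤ φ := by rw [hφdef]; linarith
  have hφsq : φ^2 = φ + 1 := by rw [hφdef]; field_simp; nlinarith [hs]
  set δ := min ε (1/2 : ℝ) with hδdef
  have hδ0 : 0 < δ := lt_min hε (by norm_num)
  have hδ2 : δ ≤ 1/2 := min_le_right _ _
  have hδε : δ ≤ ε := min_le_left _ _
  set y := Real.sqrt δ with hydef
  have hy : y^2 = δ := Real.sq_sqrt hδ0.le
  have hy0 : 0 < y := Real.sqrt_pos.2 hδ0
  set b := Real.sqrt (φ^2 + δ) with hbdef
  have hb : b^2 = φ^2 + δ := Real.sq_sqrt (by positivity)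
  have hb0 : 0 < b := Real.sqrt_pos.2 (by positivity)
  set c := Real.sqrt ((φ+1)^2 + δ) with hcdef
  have hc : c^2 = (φ+1)^2 + δ := Real.sq_sqrt (by positivity)
  have hc0 : 0 < c := Real.sqrt_pos.2 (by positivity)
  set t := c / b with htdef
  have ht0 : 0 < t := div_pos hc0 hb0
  have ht : t^2 * b^2 = c^2 := by
    rw [htdef]; field_simp
  have hφb : φ < b := by nlinarith
  have hbc : b < c := by nlinarith
  have hKpos := Ktri_pos
  have hyK : 0 < y * Ktri := mul_pos hy0 hKpos
  refine ⟨pt (-φ) y, pt 1 0, pt 0 0, pt b 0,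
    pt ((1-t)*(-φ)) ((1-t)*y), pt (1-c) 0, ?_, ?_, ?_, ?_, ?_, ?_, ?_, ?_, ?_, ?_, ?_, ?_⟩
  · -- affine independence
    apply aff_ind_pt
    rw [show (1 - -φ)*(0-y) - (0 - -φ)*(0-y) = -y by ring]
    exact neg_ne_zero.mpr hy0.ne'
  · -- dist B C < dist C A
    rw [dist_pt, dist_pt]
    rw [show ((1:ℝ)-0)^2 + ((0:ℝ)-0)^2 = 1 by norm_num,
      show (0 - -φ)^2 + (0-y)^2 = φ^2 + δ by rw [← hy]; ring, Real.sqrt_one, ← hbdef]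
    nlinarith
  · -- dist C A < dist A B
    rw [dist_pt, dist_pt]
    rw [show (0 - -φ)^2 + (0-y)^2 = φ^2 + δ by rw [← hy]; ring,
      show (-φ - 1)^2 + (y-0)^2 = (φ+1)^2 + δ by rw [← hy]; ring, ← hbdef, ← hcdef]
    exact hbc
  · -- OnRay C B B'
    show SameRay ℝ (pt 1 0 - pt 0 0) (pt b 0 - pt 0 0)
    rw [sub_pt, sub_pt]
    rw [show pt (b-0) (0-0) = b • pt (1-0) (0-0) by rw [smul_pt]; norm_num]
    exact SameRay.sameRay_nonneg_smul_right _ hb0.le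
  · -- dist C B' = dist C A
    rw [dist_pt, dist_pt]
    rw [show (0-b)^2 + ((0:ℝ)-0)^2 = φ^2 + δ by rw [← hb]; ring,
      show (0 - -φ)^2 + (0-y)^2 = φ^2 + δ by rw [← hy]; ring]
  · -- OnRay A C C'
    show SameRay ℝ (pt 0 0 - pt (-φ) y) (pt ((1-t)*(-φ)) ((1-t)*y) - pt (-φ) y)
    rw [sub_pt, sub_pt]
    rw [show pt ((1-t)*(-φ) - -φ) ((1-t)*y - y) = t • pt (0 - -φ) (0-y) by
      rw [smul_pt]; congr 1 <;> ring]
    exact SameRay.sameRay_nonneg_smul_right _ ht0.le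
  · -- dist A C' = dist A B
    rw [dist_pt, dist_pt]
    congr 1
    linear_combination (t^2-1)*hy - t^2*hb + hc + ht
  · -- OnRay B C C''
    show SameRay ℝ (pt 0 0 - pt 1 0) (pt (1-c) 0 - pt 1 0)
    rw [sub_pt, sub_pt]
    rw [show pt (1-c-1) ((0:ℝ)-0) = c • pt (0-1) (0-0) by rw [smul_pt]; congr 1 <;> ring]
    exact SameRay.sameRay_nonneg_smul_right _ hc0.le
  · -- dist B C'' = dist A B
    rw [dist_pt, dist_pt]
    congr 1
    linear_combination hc - hy
  · -- area 1
    rw [triArea_pt, triArea_pt,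
      show ((1:ℝ) - -φ)*(0-y) - (0 - -φ)*(0-y) = -y by ring,
      show (b - -φ)*(0-y) - (0 - -φ)*(0-y) = -(b*y) by ring,
      abs_neg, abs_neg, abs_of_pos hy0, abs_of_pos (mul_pos hb0 hy0)]
    have h1 : φ - ε < b := by linarith
    nlinarith
  · -- area 2
    rw [triArea_pt, triArea_pt,
      show ((1:ℝ) - -φ)*(0-y) - (0 - -φ)*(0-y) = -y by ring,
      show ((1:ℝ) - -φ)*((1-t)*y - y) - ((1-t)*(-φ) - -φ)*(0-y) = -(t*y) by ring,
      abs_neg, abs_neg, abs_of_pos hy0, abs_of_pos (mul_pos ht0 hy0)]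
    have hq0 : (0:ℝ) ≤ φ - δ := by linarith
    have hsq : ((φ-δ)*b)^2 < c^2 := by
      rw [mul_pow, hb, hc]
      nlinarith [mul_pos hδ0 hδ0, sq_nonneg (φ - δ), mul_pos hδ0 hδ0]
    have hlt : (φ-δ)*b < c := lt_of_pow_lt_pow_left₀ 2 hc0.le hsq
    have h1 : φ - δ < t := by
      rw [htdef, lt_div_iff₀ hb0]; exact hlt
    have h2 : φ - ε < t := by linarith
    nlinarith
  · -- area 3
    rw [triArea_pt, triArea_pt,
      show ((1:ℝ) - -φ)*(0-y) - (0 - -φ)*(0-y) = -y by ring,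
      show ((1:ℝ) - -φ)*(0-y) - (1-c - -φ)*(0-y) = -(c*y) by ring,
      abs_neg, abs_neg, abs_of_pos hy0, abs_of_pos (mul_pos hc0 hy0)]
    have h1 : φ - ε < c := by linarith
    nlinarith
end
end

section
/- For every triangle ABC with side lengths a < b < c, t(AB₁C) < t(ABC̄): the special container of the second kind AB₁C has strictly smaller area than the special container of the third kind ABC̄. -/
open EuclideanGeometry MeasureTheory Real Pointwise

noncomputable section

lemma tri_smul_aux (P Q R : Pt) (h : LinearIndependent ℝ ![Q - P, R - P]) (t : ℝ) :
    triArea P (P + t • (Q - P)) R = |t| * triArea P Q R := by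
  have hcard : Fintype.card (Fin 2) = Module.finrank ℝ Pt := by
    simp [finrank_euclideanSpace_fin]
  let b : Module.Basis (Fin 2) ℝ Pt := basisOfLinearIndependentOfCardEqFinrank h hcard
  have hb : ⇑b = ![Q - P, R - P] := coe_basisOfLinearIndependentOfCardEqFinrank h hcard
  have hb0 : b 0 = Q - P := by rw [hb]; rfl
  have hb1 : b 1 = R - P := by rw [hb]; rfl
  let L : Pt →ₗ[ℝ] Pt := b.constr ℝ ![t • (Q - P), R - P]
  have hL0 : L (b 0) = t • b 0 := by
    rw [show L (b 0) = ![t • (Q - P), R - P] 0 from b.constr_basis ℝ _ 0, hb0]; rfl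
  have hL1 : L (b 1) = b 1 := by
    rw [show L (b 1) = ![t • (Q - P), R - P] 1 from b.constr_basis ℝ _ 1, hb1]; rfl
  have hdet : LinearMap.det L = t := by
    rw [← LinearMap.det_toMatrix b]
    have hM : LinearMap.toMatrix b b L = Matrix.of ![![t, 0], ![0, 1]] := by
      ext i j
      rw [LinearMap.toMatrix_apply]
      fin_cases j <;> fin_cases i <;>
        simp [hL0, hL1, _root_.map_smul, Module.Basis.repr_self, Finsupp.smul_single]
    rw [hM, Matrix.det_fin_two]
    simp
  -- the affine map
  let f : Pt →ᵃ[ℝ] Pt :=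
    { toFun := fun x => L (x - P) + P
      linear := L
      map_vadd' := by
        intro p v
        show L (v + p - P) + P = L v + (L (p - P) + P)
        rw [add_sub_assoc, map_add, add_assoc] }
  have hfP : f P = P := by show L (P - P) + P = P; simp
  have hfQ : f Q = P + t • (Q - P) := by
    show L (Q - P) + P = P + t • (Q - P)
    rw [← hb0, hL0, hb0, add_comm]
  have hfR : f R = R := by
    show L (R - P) + P = R
    rw [← hb1, hL1, hb1, sub_add_cancel]
  have himg : f '' tri P Q R = tri P (P + t • (Q - P)) R := by
    rw [tri, AffineMap.image_convexHull, Set.image_insert_eq, Set.image_insert_eq,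
      Set.image_singleton, hfP, hfQ, hfR, tri]
  have hcoe : ⇑f = (fun y => P +ᵥ y) ∘ ⇑L ∘ (fun x => -P +ᵥ x) := by
    funext x
    show L (x - P) + P = P + L (-P + x)
    rw [neg_add_eq_sub, add_comm]
  have hvol : volume (f '' tri P Q R) = ENNReal.ofReal |t| * volume (tri P Q R) := by
    rw [hcoe, Set.image_comp, Set.image_comp]
    rw [Set.image_vadd, Set.image_vadd]
    rw [measure_vadd, Measure.addHaar_image_linearMap, hdet, measure_vadd]
  rw [triArea, ← himg, hvol, ENNReal.toReal_mul, ENNReal.toReal_ofReal (abs_nonneg t)]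
  rfl

lemma range_three (A B C : Pt) : Set.range ![A, B, C] = {A, B, C} := by
  ext x
  constructor
  · rintro ⟨i, rfl⟩
    fin_cases i <;> simp
  · rintro (rfl | rfl | rfl)
    exacts [⟨0, rfl⟩, ⟨1, rfl⟩, ⟨2, rfl⟩]

lemma tri_rot (A B C : Pt) : tri A B C = tri B C A := by
  unfold tri
  congr 1
  ext x
  simp only [Set.mem_insert_iff, Set.mem_singleton_iff]
  tauto

lemma triArea_rot (A B C : Pt) : triArea A B C = triArea B C A := by
  rw [triArea, tri_rot, triArea]

lemma affInd_rot {A B C : Pt} (h : AffineIndependent ℝ ![A, B, C]) :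
    AffineIndependent ℝ ![B, C, A] := by
  rw [affineIndependent_iff_not_collinear_set] at h ⊢
  have : ({B, C, A} : Set Pt) = {A, B, C} := by
    ext x
    simp only [Set.mem_insert_iff, Set.mem_singleton_iff]
    tauto
  rw [this]
  exact h

lemma linIndep_of_affInd {A B C : Pt} (h : AffineIndependent ℝ ![A, B, C]) :
    LinearIndependent ℝ ![B - A, C - A] := by
  have h2 := (affineIndependent_iff_linearIndependent_vsub ℝ ![A, B, C] 0).mp h
  let e : Fin 2 → {x : Fin 3 // x ≠ 0} := ![⟨1, by decide⟩, ⟨2, by decide⟩]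
  have he : Function.Injective e := by
    intro i j hij
    fin_cases i <;> fin_cases j <;> simp_all [e]
  have h3 := h2.comp e he
  convert h3 using 1
  · funext j
    fin_cases j <;> rfl
  · rfl

lemma triArea_pos {A B C : Pt} (h : AffineIndependent ℝ ![A, B, C]) :
    0 < triArea A B C := by
  have hspan : affineSpan ℝ (Set.range ![A, B, C]) = ⊤ := by
    rw [h.affineSpan_eq_top_iff_card_eq_finrank_add_one]
    simp [finrank_euclideanSpace_fin]
  rw [range_three] at hspan
  have hint : (interior (tri A B C)).Nonempty := by
    rw [tri, interior_convexHull_nonempty_iff_affineSpan_eq_top]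
    exact hspan
  have hpos : 0 < volume (tri A B C) := (volume : Measure Pt).measure_pos_of_nonempty_interior hint
  have hfin : volume (tri A B C) < ⊤ :=
    ((Set.toFinite ({A, B, C} : Set Pt)).isCompact_convexHull (𝕜 := ℝ)).measure_lt_top
  exact ENNReal.toReal_pos hpos.ne' hfin.ne

set_option maxHeartbeats 1000000 in
/-- for a triangle `A B C` with side lengths `a < b < c`,
the special container of the second kind `AB₁C` has strictly smaller area
than the special container of the third kind `ABC̄`. -/
theorem statement12 (A B C B₁ Cbar : Pt)
    (hABC : AffineIndependent ℝ ![A, B, C])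
    (hab : dist B C < dist C A) (hbc : dist C A < dist A B)
    (hB₁ray : OnRay A B B₁) (hB₁ne : B₁ ≠ A) (hB₁dist : dist B₁ C = dist C A)
    (hCbarLine : Cbar ∈ line[ℝ, B, C])
    (hCbarDist : dist Cbar A = dist Cbar B) :
    triArea A B₁ C < triArea A B Cbar := by
  set u : Pt := B - A with hu
  set v : Pt := C - A with hv
  set cc : ℝ := ‖u‖ ^ 2 with hccdef
  set bb : ℝ := ‖v‖ ^ 2 with hbbdef
  set aa : ℝ := ‖u - v‖ ^ 2 with haadef
  set p : ℝ := inner ℝ u v with hpdef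
  clear_value cc bb aa p
  have hli : LinearIndependent ℝ ![u, v] := linIndep_of_affInd hABC
  -- basic squared-distance inequalities
  have haabb : aa < bb := by
    have h1 : dist B C = ‖u - v‖ := by
      rw [dist_eq_norm]; congr 1; rw [hu, hv]; abel
    have h2 : dist C A = ‖v‖ := by rw [dist_eq_norm]
    rw [h1, h2] at hab
    have := norm_nonneg (u - v)
    nlinarith
  have hbbcc : bb < cc := by
    have h2 : dist C A = ‖v‖ := by rw [dist_eq_norm]
    have h3 : dist A B = ‖u‖ := by rw [dist_comm, dist_eq_norm]
    rw [h2, h3] at hbc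
    have := norm_nonneg v
    nlinarith
  have haa0 : 0 ≤ aa := haadef ▸ sq_nonneg _
  have hbb0 : 0 ≤ bb := hbbdef ▸ sq_nonneg _
  have hcc0 : 0 < cc := lt_of_le_of_lt haa0 (haabb.trans hbbcc)
  have hp : 2 * p = cc + bb - aa := by
    have := norm_sub_sq_real u v
    rw [← haadef, ← hccdef, ← hbbdef, ← hpdef] at this
    linarith
  -- B₁ = A + r • u
  obtain ⟨r, hr0, hru⟩ := hB₁ray.exists_nonneg_left (by
    intro h0
    have : cc = 0 := by rw [hccdef, show u = 0 from hu.trans h0]; simp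
    linarith)
  have hB₁ : B₁ = A + r • u := by
    have : B₁ - A = r • u := hru.symm
    rw [← this]; abel
  have hrne : r ≠ 0 := by
    intro h0
    apply hB₁ne
    rw [hB₁, h0, zero_smul, add_zero]
  -- equation for r
  have hreq : r * cc = 2 * p := by
    have h1 : ‖r • u - v‖ = ‖v‖ := by
      have e1 : dist B₁ C = ‖r • u - v‖ := by
        rw [dist_eq_norm]; congr 1; rw [hB₁, hu, hv]; abel
      have e2 : dist C A = ‖v‖ := by rw [dist_eq_norm]
      rw [← e1, ← e2, hB₁dist]
    have h2 : ‖r • u - v‖ ^ 2 = ‖v‖ ^ 2 := by rw [h1]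
    rw [norm_sub_sq_real, inner_smul_left, norm_smul] at h2
    simp only [RCLike.ofReal_real_eq_id, id_eq, mul_pow, sq_abs, Real.norm_eq_abs,
      starRingEnd_apply, star_trivial] at h2
    rw [← hccdef, ← hbbdef, ← hpdef] at h2
    have h3 : r * (r * cc - 2 * p) = 0 := by nlinarith
    rcases mul_eq_zero.mp h3 with h | h
    · exact absurd h hrne
    · linarith
  -- Cbar = B + s • (C - B)
  obtain ⟨s, hs⟩ := (vadd_left_mem_affineSpan_pair (k := ℝ)).mp
    (show (Cbar -ᵥ B) +ᵥ B ∈ line[ℝ, B, C] by rwa [vsub_vadd])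
  have hCbar : Cbar = B + s • (v - u) := by
    have e : C -ᵥ B = v - u := by rw [hv, hu]; show C - B = _; abel
    rw [e] at hs
    show Cbar = B + s • (v - u)
    have : Cbar - B = s • (v - u) := hs.symm
    rw [← this]; abel
  -- equation for s
  have hseq : cc + 2 * s * (p - cc) = 0 := by
    have h1 : ‖u + s • (v - u)‖ = ‖s • (v - u)‖ := by
      have e1 : dist Cbar A = ‖u + s • (v - u)‖ := by
        rw [dist_eq_norm]; congr 1; rw [hCbar, hu]; abel
      have e2 : dist Cbar B = ‖s • (v - u)‖ := by
        rw [dist_eq_norm]; congr 1; rw [hCbar]; abel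
      rw [← e1, ← e2, hCbarDist]
    have h2 : ‖u + s • (v - u)‖ ^ 2 = ‖s • (v - u)‖ ^ 2 := by rw [h1]
    rw [norm_add_sq_real, inner_smul_right, inner_sub_right] at h2
    rw [← hpdef] at h2
    have e3 : (inner ℝ u u : ℝ) = cc := by rw [hccdef]; exact real_inner_self_eq_norm_sq u
    rw [e3, ← hccdef] at h2
    linarith
  -- positivity facts
  have hpcc : p - cc < 0 := by linarith
  have hppos : 0 < p := by linarith
  have hrpos : 0 < r := lt_of_le_of_ne hr0 (Ne.symm hrne)
  have hspos : 0 < s := by nlinarith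
  -- areas
  have hK : 0 < triArea A B C := triArea_pos hABC
  have h1 : triArea A B₁ C = r * triArea A B C := by
    rw [hB₁, tri_smul_aux A B C hli r, abs_of_pos hrpos]
  have hli2 : LinearIndependent ℝ ![C - B, A - B] := linIndep_of_affInd (affInd_rot hABC)
  have h2 : triArea A B Cbar = s * triArea A B C := by
    have e : Cbar = B + s • (C - B) := by
      rw [hCbar]; congr 1; rw [hv, hu]; congr 1; abel
    rw [triArea_rot A B Cbar, e, tri_smul_aux B C A hli2 s, abs_of_pos hspos,
      ← triArea_rot A B C]
  rw [h1, h2]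
  apply mul_lt_mul_of_pos_right _ hK
  -- r < s
  have key : (cc - 2 * p) ^ 2 > 0 := by
    have : cc - 2 * p = aa - bb := by linarith
    rw [this]
    have : aa - bb ≠ 0 := by linarith
    positivity
  nlinarith [mul_pos hcc0 (by linarith : (0:ℝ) < cc - p), hreq, hseq]
end
end

section
/- Every triangle ABC has at least one minimum area isosceles container: there exists an isosceles triangle T' whose convex hull contains ABC such that every isosceles triangle containing ABC has area at least t(T'). -/
open EuclideanGeometry MeasureTheory Real

noncomputable section

/-! ### Auxiliary material -/

open Pointwise

/-- A point of the plane from coordinates. -/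
def mk2 (x y : ℝ) : Pt := WithLp.toLp 2 ![x, y]

lemma add_apply' (x y : Pt) (i : Fin 2) : (x + y) i = x i + y i := rfl
lemma sub_apply' (x y : Pt) (i : Fin 2) : (x - y) i = x i - y i := rfl
lemma smul_apply' (t : ℝ) (x : Pt) (i : Fin 2) : (t • x) i = t * x i := rfl
lemma mk2_zero (x y : ℝ) : mk2 x y 0 = x := rfl
lemma mk2_one (x y : ℝ) : mk2 x y 1 = y := rfl

lemma pt_ext {x y : Pt} (h0 : x 0 = y 0) (h1 : x 1 = y 1) : x = y := by
  apply PiLp.ext; intro i; fin_cases i <;> assumption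

lemma norm_eq2 (x : Pt) : ‖x‖ = Real.sqrt (x 0 ^ 2 + x 1 ^ 2) := by
  rw [EuclideanSpace.norm_eq]
  simp [Fin.sum_univ_two, sq_abs, Real.norm_eq_abs]

lemma abs_coord_le0 (x : Pt) : |x 0| ≤ ‖x‖ := by
  rw [norm_eq2, show |x 0| = Real.sqrt ((x 0) ^ 2) from (Real.sqrt_sq_eq_abs _).symm]
  exact Real.sqrt_le_sqrt (by nlinarith [sq_nonneg (x 1)])

lemma abs_coord_le1 (x : Pt) : |x 1| ≤ ‖x‖ := by
  rw [norm_eq2, show |x 1| = Real.sqrt ((x 1) ^ 2) from (Real.sqrt_sq_eq_abs _).symm]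
  exact Real.sqrt_le_sqrt (by nlinarith [sq_nonneg (x 0)])

/-- The "signed double area" determinant of a triple of points. -/
def mdet (X Y Z : Pt) : ℝ :=
  (Y 0 - X 0) * (Z 1 - X 1) - (Y 1 - X 1) * (Z 0 - X 0)

lemma cont_mdet : Continuous fun p : Pt × Pt × Pt => mdet p.1 p.2.1 p.2.2 := by
  unfold mdet
  fun_prop

/-! #### Membership in a triangle -/

lemma range_three_s14 (S P R : Pt) : Set.range ![S, P, R] = {S, P, R} := by
  ext x
  constructor
  · rintro ⟨i, rfl⟩; fin_cases i <;> simp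
  · rintro (rfl | rfl | rfl)
    exacts [⟨0, rfl⟩, ⟨1, rfl⟩, ⟨2, rfl⟩]

lemma affComb3 (w : Fin 3 → ℝ) (hw : ∑ i, w i = 1) (v : Fin 3 → Pt) :
    Finset.univ.affineCombination ℝ v w = w 0 • v 0 + w 1 • v 1 + w 2 • v 2 := by
  rw [Finset.affineCombination_eq_linear_combination _ _ _ hw, Fin.sum_univ_three]

lemma mem_tri_iff {x S P R : Pt} :
    x ∈ tri S P R ↔ ∃ a b c : ℝ, 0 ≤ a ∧ 0 ≤ b ∧ 0 ≤ c ∧ a + b + c = 1 ∧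
      a • S + b • P + c • R = x := by
  have hr : ({S, P, R} : Set Pt) = Set.range ![S, P, R] := (range_three_s14 S P R).symm
  rw [tri, hr, convexHull_range_eq_exists_affineCombination]
  constructor
  · rintro ⟨s, w, hw0, hw1, rfl⟩
    set w' := Set.indicator (↑s) w with hw'
    have hsum : ∑ i, w' i = 1 := by
      rw [hw', Finset.sum_indicator_subset w (Finset.subset_univ s)]
      exact hw1
    have hcomb := Finset.affineCombination_indicator_subset (k := ℝ) w ![S, P, R]
      (Finset.subset_univ s)
    refine ⟨w' 0, w' 1, w' 2, ?_, ?_, ?_, ?_, ?_⟩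
    · exact Set.indicator_apply_nonneg fun hi => hw0 0 hi
    · exact Set.indicator_apply_nonneg fun hi => hw0 1 hi
    · exact Set.indicator_apply_nonneg fun hi => hw0 2 hi
    · rw [← hsum, Fin.sum_univ_three]
    · rw [hcomb, affComb3 w' hsum]
      simp
  · rintro ⟨a, b, c, ha, hb, hc, habc, rfl⟩
    have hw1 : ∑ i, (![a, b, c] : Fin 3 → ℝ) i = 1 := by
      rw [Fin.sum_univ_three]; simpa using habc
    refine ⟨Finset.univ, ![a, b, c], ?_, hw1, ?_⟩
    · intro i _; fin_cases i <;> assumption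
    · rw [affComb3 _ hw1]; simp

lemma mem_tri₁ (X Y Z : Pt) : X ∈ tri X Y Z :=
  subset_convexHull ℝ _ (Set.mem_insert _ _)
lemma mem_tri₂ (X Y Z : Pt) : Y ∈ tri X Y Z :=
  subset_convexHull ℝ _ (by simp)
lemma mem_tri₃ (X Y Z : Pt) : Z ∈ tri X Y Z :=
  subset_convexHull ℝ _ (by simp)

lemma tri_subset {X' Y' Z' S P R : Pt} (h1 : X' ∈ tri S P R) (h2 : Y' ∈ tri S P R)
    (h3 : Z' ∈ tri S P R) : tri X' Y' Z' ⊆ tri S P R := by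
  refine convexHull_min ?_ (convex_convexHull ℝ _)
  intro x hx
  rcases hx with rfl | rfl | rfl <;> assumption

/-! #### The area formula -/

def Lmap (u v : Pt) : Pt →ₗ[ℝ] Pt where
  toFun x := x 0 • u + x 1 • v
  map_add' x y := by
    show ((x + y) 0) • u + ((x + y) 1) • v = _
    rw [add_apply', add_apply', add_smul, add_smul]; abel
  map_smul' c x := by
    show ((c • x) 0) • u + ((c • x) 1) • v = _
    rw [smul_apply' c x 0, smul_apply' c x 1, mul_smul, mul_smul, RingHom.id_apply, smul_add]

lemma Lmap_det (u v : Pt) : LinearMap.det (Lmap u v) = u 0 * v 1 - u 1 * v 0 := by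
  let b := (EuclideanSpace.basisFun (Fin 2) ℝ).toBasis
  rw [← LinearMap.det_toMatrix b, Matrix.det_fin_two]
  simp [LinearMap.toMatrix_apply, b, Lmap, EuclideanSpace.basisFun_apply,
    EuclideanSpace.single_apply, add_apply', smul_apply']
  ring

def e0 : Pt := EuclideanSpace.single 0 1
def e1 : Pt := EuclideanSpace.single 1 1
def K2 : ENNReal := volume (tri 0 e0 e1)
def kconst : ℝ := K2.toReal

lemma Lmap_e0 (u v : Pt) : Lmap u v e0 = u := by
  show (e0 0) • u + (e0 1) • v = u
  have h0 : e0 0 = 1 := by simp [e0, EuclideanSpace.single_apply]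
  have h1 : e0 1 = 0 := by simp [e0, EuclideanSpace.single_apply]
  rw [h0, h1]; simp

lemma Lmap_e1 (u v : Pt) : Lmap u v e1 = v := by
  show (e1 0) • u + (e1 1) • v = v
  have h0 : e1 0 = 0 := by simp [e1, EuclideanSpace.single_apply]
  have h1 : e1 1 = 1 := by simp [e1, EuclideanSpace.single_apply]
  rw [h0, h1]; simp

lemma tri_image (X Y Z : Pt) :
    tri X Y Z = X +ᵥ (⇑(Lmap (Y - X) (Z - X)) '' tri 0 e0 e1) := by
  have h : tri 0 e0 e1 = convexHull ℝ {0, e0, e1} := rfl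
  rw [h, (Lmap (Y - X) (Z - X)).image_convexHull, ← convexHull_vadd]
  rw [Set.image_insert_eq, Set.image_insert_eq, Set.image_singleton,
    map_zero, Lmap_e0, Lmap_e1, tri]
  congr 1
  rw [Set.vadd_set_insert, Set.vadd_set_insert, Set.vadd_set_singleton]
  simp [vadd_eq_add]

lemma isCompact_tri (X Y Z : Pt) : IsCompact (tri X Y Z) := by
  apply Set.Finite.isCompact_convexHull
  exact (Set.finite_singleton Z).insert Y |>.insert X

lemma volume_tri_lt_top (X Y Z : Pt) : volume (tri X Y Z) < ⊤ :=
  (isCompact_tri X Y Z).measure_lt_top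

lemma volume_tri (X Y Z : Pt) :
    volume (tri X Y Z) = ENNReal.ofReal |mdet X Y Z| * K2 := by
  rw [tri_image, measure_vadd (μ := volume), Measure.addHaar_image_linearMap _ _ _, Lmap_det]
  rfl

lemma triArea_eq (X Y Z : Pt) : triArea X Y Z = |mdet X Y Z| * kconst := by
  rw [triArea, volume_tri, ENNReal.toReal_mul, ENNReal.toReal_ofReal (abs_nonneg _)]
  rfl

/-! #### Positivity and affine independence -/

lemma volume_tri_pos {A B C : Pt} (h : AffineIndependent ℝ ![A, B, C]) :
    0 < volume (tri A B C) := by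
  have hspan : affineSpan ℝ (Set.range ![A, B, C]) = ⊤ := by
    rw [h.affineSpan_eq_top_iff_card_eq_finrank_add_one]
    simp [finrank_euclideanSpace_fin]
  rw [range_three_s14] at hspan
  have hne : (interior (tri A B C)).Nonempty := by
    rw [tri]
    exact interior_convexHull_nonempty_iff_affineSpan_eq_top.mpr hspan
  have h1 : 0 < volume (interior (tri A B C)) := isOpen_interior.measure_pos volume hne
  exact h1.trans_le (measure_mono interior_subset)

lemma mdet_eq_zero_of_collinear {X Y Z : Pt} (h : Collinear ℝ ({X, Y, Z} : Set Pt)) :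
    mdet X Y Z = 0 := by
  rw [collinear_iff_of_mem (Set.mem_insert X _)] at h
  obtain ⟨v, hv⟩ := h
  obtain ⟨rY, hY⟩ := hv Y (by simp)
  obtain ⟨rZ, hZ⟩ := hv Z (by simp)
  have hY0 : Y 0 = rY * v 0 + X 0 := by rw [hY]; rfl
  have hY1 : Y 1 = rY * v 1 + X 1 := by rw [hY]; rfl
  have hZ0 : Z 0 = rZ * v 0 + X 0 := by rw [hZ]; rfl
  have hZ1 : Z 1 = rZ * v 1 + X 1 := by rw [hZ]; rfl
  rw [mdet, hY0, hY1, hZ0, hZ1]; ring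

lemma affineIndependent_of_mdet_ne_zero {X Y Z : Pt} (h : mdet X Y Z ≠ 0) :
    AffineIndependent ℝ ![X, Y, Z] := by
  rw [affineIndependent_iff_not_collinear, range_three_s14]
  exact fun hc => h (mdet_eq_zero_of_collinear hc)

lemma mdet_ne_zero_of_subset {A B C S P R : Pt} (hpos : 0 < volume (tri A B C))
    (hsub : tri A B C ⊆ tri S P R) : mdet S P R ≠ 0 := by
  intro h
  have hle := measure_mono (μ := volume) hsub
  rw [volume_tri S P R, h] at hle
  simp only [abs_zero, ENNReal.ofReal_zero, zero_mul, le_zero_iff] at hle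
  exact hpos.ne' hle

/-! #### Closedness of constraints -/

lemma isClosed_memtri (x : Pt) :
    IsClosed {p : Pt × Pt × Pt | x ∈ tri p.1 p.2.1 p.2.2} := by
  apply IsSeqClosed.isClosed
  intro pn p hmem hlim
  choose a b c h0a h0b h0c hsum hcombo using fun n => mem_tri_iff.mp (hmem n)
  have hK : IsCompact ((Set.Icc (0:ℝ) 1) ×ˢ (Set.Icc (0:ℝ) 1) ×ˢ (Set.Icc (0:ℝ) 1)) :=
    isCompact_Icc.prod (isCompact_Icc.prod isCompact_Icc)
  have hmemK : ∀ n, (a n, b n, c n) ∈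
      ((Set.Icc (0:ℝ) 1) ×ˢ (Set.Icc (0:ℝ) 1) ×ˢ (Set.Icc (0:ℝ) 1)) := by
    intro n
    refine ⟨⟨h0a n, ?_⟩, ⟨h0b n, ?_⟩, ⟨h0c n, ?_⟩⟩ <;> nlinarith [h0a n, h0b n, h0c n, hsum n]
  obtain ⟨l, _, φ, hφ, hφtend⟩ := hK.tendsto_subseq hmemK
  have hta : Filter.Tendsto (fun n => a (φ n)) Filter.atTop (nhds l.1) :=
    (continuous_fst.tendsto l).comp hφtend
  have htb : Filter.Tendsto (fun n => b (φ n)) Filter.atTop (nhds l.2.1) :=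
    ((continuous_fst.comp continuous_snd).tendsto l).comp hφtend
  have htc : Filter.Tendsto (fun n => c (φ n)) Filter.atTop (nhds l.2.2) :=
    ((continuous_snd.comp continuous_snd).tendsto l).comp hφtend
  have hplim : Filter.Tendsto (fun n => pn (φ n)) Filter.atTop (nhds p) :=
    hlim.comp hφ.tendsto_atTop
  have htP1 : Filter.Tendsto (fun n => (pn (φ n)).1) Filter.atTop (nhds p.1) :=
    (continuous_fst.tendsto p).comp hplim
  have htP2 : Filter.Tendsto (fun n => (pn (φ n)).2.1) Filter.atTop (nhds p.2.1) :=
    ((continuous_fst.comp continuous_snd).tendsto p).comp hplim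
  have htP3 : Filter.Tendsto (fun n => (pn (φ n)).2.2) Filter.atTop (nhds p.2.2) :=
    ((continuous_snd.comp continuous_snd).tendsto p).comp hplim
  have hcomb : Filter.Tendsto
      (fun n => a (φ n) • (pn (φ n)).1 + b (φ n) • (pn (φ n)).2.1 + c (φ n) • (pn (φ n)).2.2)
      Filter.atTop (nhds (l.1 • p.1 + l.2.1 • p.2.1 + l.2.2 • p.2.2)) :=
    ((hta.smul htP1).add (htb.smul htP2)).add (htc.smul htP3)
  have heq : l.1 • p.1 + l.2.1 • p.2.1 + l.2.2 • p.2.2 = x := by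
    refine tendsto_nhds_unique hcomb ?_
    simpa only [hcombo] using (tendsto_const_nhds : Filter.Tendsto (fun _ : ℕ => x) _ _)
  refine mem_tri_iff.mpr ⟨l.1, l.2.1, l.2.2, ?_, ?_, ?_, ?_, heq⟩
  · exact ge_of_tendsto' hta fun n => h0a (φ n)
  · exact ge_of_tendsto' htb fun n => h0b (φ n)
  · exact ge_of_tendsto' htc fun n => h0c (φ n)
  · exact tendsto_nhds_unique ((hta.add htb).add htc)
      (by simpa only [hsum] using (tendsto_const_nhds : Filter.Tendsto (fun _ : ℕ => (1:ℝ)) _ _))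

lemma isClosed_iso : IsClosed {p : Pt × Pt × Pt | IsIsosceles p.1 p.2.1 p.2.2} := by
  have h1 : Continuous fun p : Pt × Pt × Pt => p.1 := continuous_fst
  have h2 : Continuous fun p : Pt × Pt × Pt => p.2.1 := continuous_fst.comp continuous_snd
  have h3 : Continuous fun p : Pt × Pt × Pt => p.2.2 := continuous_snd.comp continuous_snd
  exact (isClosed_eq (h2.dist h3) (h3.dist h1)).union
    ((isClosed_eq (h3.dist h1) (h1.dist h2)).union
    (isClosed_eq (h1.dist h2) (h2.dist h3)))

/-! #### A vertex bound for containers of small area -/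

def rot (x : Pt) : Pt := mk2 (-(x 1)) (x 0)
lemma rot_zero' (x : Pt) : rot x 0 = -(x 1) := rfl
lemma rot_one' (x : Pt) : rot x 1 = x 0 := rfl

lemma vertex_bound (hk : 0 < kconst) {ctr V S P R : Pt} {ε : ℝ} (hε : 0 < ε)
    (hb : Metric.ball ctr ε ⊆ tri S P R) (hV : V ∈ tri S P R) :
    ε * ‖ctr - V‖ ≤ |mdet S P R| := by
  rcases eq_or_ne (ctr - V) 0 with h | h
  · rw [h, norm_zero, mul_zero]; exact abs_nonneg _
  set v : Pt := ctr - V with hv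
  have hn : 0 < ‖v‖ := norm_pos_iff.mpr h
  set n := ‖v‖ with hndef
  set t := ε / (2 * n) with ht
  have ht0 : 0 < t := by positivity
  set w : Pt := t • rot v with hw
  have hveq : n = Real.sqrt ((ctr 0 - V 0) ^ 2 + (ctr 1 - V 1) ^ 2) := by
    rw [hndef, norm_eq2, hv, sub_apply', sub_apply']
  have hrot : ‖rot v‖ = n := by
    rw [norm_eq2, hveq, rot_zero', rot_one', hv, sub_apply', sub_apply']
    congr 1
    ring
  have hwn : ‖w‖ = ε / 2 := by
    rw [hw, norm_smul, Real.norm_eq_abs, abs_of_pos ht0, hrot, ht]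
    field_simp
  have hY : ctr + w ∈ tri S P R := by
    apply hb
    rw [Metric.mem_ball, dist_eq_norm, add_sub_cancel_left, hwn]
    linarith
  have hZ : ctr - w ∈ tri S P R := by
    apply hb
    rw [Metric.mem_ball, dist_eq_norm, sub_sub_cancel_left, norm_neg, hwn]
    linarith
  have hsub : tri V (ctr + w) (ctr - w) ⊆ tri S P R := tri_subset hV hY hZ
  have harea : triArea V (ctr + w) (ctr - w) ≤ triArea S P R :=
    ENNReal.toReal_mono (volume_tri_lt_top S P R).ne (measure_mono hsub)
  rw [triArea_eq, triArea_eq] at harea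
  have hmdet : mdet V (ctr + w) (ctr - w)
      = -(2 * t * ((ctr 0 - V 0) ^ 2 + (ctr 1 - V 1) ^ 2)) := by
    simp only [mdet, add_apply', sub_apply', hw, smul_apply', rot_zero', rot_one', hv]
    ring
  have hsq : (ctr 0 - V 0) ^ 2 + (ctr 1 - V 1) ^ 2 = n ^ 2 := by
    rw [hveq, Real.sq_sqrt (by positivity)]
  have habs : |mdet V (ctr + w) (ctr - w)| = ε * n := by
    rw [hmdet, abs_neg, abs_of_nonneg (by positivity), hsq, ht]
    field_simp
  exact le_of_mul_le_mul_right (by rwa [habs] at harea) hk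

/-! #### An initial isosceles container -/

lemma mem_tri_M {M : ℝ} (hM : 0 < M) {X : Pt} (h0 : |X 0| ≤ M) (h1 : |X 1| ≤ M) :
    X ∈ tri (mk2 (-(3 * M)) (-M)) (mk2 (3 * M) (-M)) (mk2 0 (2 * M)) := by
  obtain ⟨hx0l, hx0r⟩ := abs_le.mp h0
  obtain ⟨hx1l, hx1r⟩ := abs_le.mp h1
  refine mem_tri_iff.mpr ⟨(2 * M - X 1 - X 0) / (6 * M), (2 * M - X 1 + X 0) / (6 * M),
    (X 1 + M) / (3 * M), ?_, ?_, ?_, ?_, ?_⟩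
  · exact div_nonneg (by linarith) (by linarith)
  · exact div_nonneg (by linarith) (by linarith)
  · exact div_nonneg (by linarith) (by linarith)
  · field_simp
    ring
  · apply pt_ext
    · simp only [add_apply', smul_apply', mk2_zero]
      field_simp
      ring
    · simp only [add_apply', smul_apply', mk2_one]
      field_simp
      ring

lemma exists_initial (A B C : Pt) :
    ∃ S P R : Pt, AffineIndependent ℝ ![S, P, R] ∧ IsIsosceles S P R ∧
      tri A B C ⊆ tri S P R := by
  set M : ℝ := 1 + max ‖A‖ (max ‖B‖ ‖C‖) with hMdef
  have hM : 0 < M := by positivity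
  have hnorm : ∀ X : Pt, X ∈ ({A, B, C} : Set Pt) → ‖X‖ ≤ M := by
    intro X hX
    have hle : ‖X‖ ≤ max ‖A‖ (max ‖B‖ ‖C‖) := by
      rcases hX with h | h | h <;> rw [h]
      · exact le_max_left _ _
      · exact (le_max_left _ _).trans (le_max_right _ _)
      · exact (le_max_right _ _).trans (le_max_right _ _)
    linarith
  refine ⟨mk2 (-(3 * M)) (-M), mk2 (3 * M) (-M), mk2 0 (2 * M), ?_, ?_, ?_⟩
  · apply affineIndependent_of_mdet_ne_zero
    have : mdet (mk2 (-(3 * M)) (-M)) (mk2 (3 * M) (-M)) (mk2 0 (2 * M)) = 18 * M ^ 2 := by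
      simp only [mdet, mk2_zero, mk2_one]
      ring
    rw [this]
    positivity
  · left
    rw [EuclideanSpace.dist_eq, EuclideanSpace.dist_eq]
    simp only [Fin.sum_univ_two, Real.dist_eq, mk2_zero, mk2_one, sq_abs]
    congr 1
    ring
  · refine convexHull_min ?_ (convex_convexHull ℝ _)
    intro x hx
    exact mem_tri_M hM ((abs_coord_le0 x).trans (hnorm x hx))
      ((abs_coord_le1 x).trans (hnorm x hx))

/-! ### The main theorem -/

/-- every triangle `A B C` has at least one minimum area
isosceles container. -/
theorem statement14 (A B C : Pt)
    (hABC : AffineIndependent ℝ ![A, B, C]) :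
    ∃ S P R : Pt, IsMinIsoscelesContainer A B C S P R := by
  classical
  -- positivity facts
  have hvol : 0 < volume (tri A B C) := volume_tri_pos hABC
  have hK2top : K2 ≠ ⊤ := (volume_tri_lt_top 0 e0 e1).ne
  have hK2ne : K2 ≠ 0 := by
    intro h
    rw [volume_tri A B C, h, mul_zero] at hvol
    exact lt_irrefl _ hvol
  have hk : 0 < kconst := ENNReal.toReal_pos hK2ne hK2top
  -- a ball inside the triangle
  obtain ⟨ctr, hctr⟩ : (interior (tri A B C)).Nonempty := by
    have hspan : affineSpan ℝ (Set.range ![A, B, C]) = ⊤ := by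
      rw [hABC.affineSpan_eq_top_iff_card_eq_finrank_add_one]
      simp [finrank_euclideanSpace_fin]
    rw [range_three_s14] at hspan
    rw [tri]
    exact interior_convexHull_nonempty_iff_affineSpan_eq_top.mpr hspan
  obtain ⟨ε, hε, hball⟩ := Metric.isOpen_iff.mp isOpen_interior ctr hctr
  replace hball : Metric.ball ctr ε ⊆ tri A B C := hball.trans interior_subset
  -- an initial container
  obtain ⟨S0, P0, R0, hind0, hiso0, hsub0⟩ := exists_initial A B C
  set f : Pt × Pt × Pt → ℝ := fun p => |mdet p.1 p.2.1 p.2.2| with hf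
  set m0 : ℝ := f (S0, P0, R0) with hm0
  set D : ℝ := ‖ctr‖ + m0 / ε with hD
  -- bound on vertices of efficient containers
  have hbound : ∀ S P R V : Pt, tri A B C ⊆ tri S P R → V ∈ tri S P R →
      f (S, P, R) ≤ m0 → ‖V‖ ≤ D := by
    intro S P R V hsub hV hle
    have h1 : ε * ‖ctr - V‖ ≤ f (S, P, R) := vertex_bound hk hε (hball.trans hsub) hV
    have h2 : ‖ctr - V‖ ≤ m0 / ε := by
      rw [le_div_iff₀ hε]
      calc ‖ctr - V‖ * ε = ε * ‖ctr - V‖ := mul_comm _ _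
        _ ≤ f (S, P, R) := h1
        _ ≤ m0 := hle
    have h3 : V = ctr - (ctr - V) := by abel
    calc ‖V‖ = ‖ctr - (ctr - V)‖ := by rw [← h3]
      _ ≤ ‖ctr‖ + ‖ctr - V‖ := norm_sub_le _ _
      _ ≤ ‖ctr‖ + m0 / ε := by linarith
      _ = D := rfl
  -- the compact constraint set
  set K' : Set (Pt × Pt × Pt) := {p | A ∈ tri p.1 p.2.1 p.2.2} ∩ {p | B ∈ tri p.1 p.2.1 p.2.2} ∩
    {p | C ∈ tri p.1 p.2.1 p.2.2} ∩ {p | IsIsosceles p.1 p.2.1 p.2.2} ∩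
    {p | f p ≤ m0} ∩ {p | ‖p.1‖ ≤ D} ∩ {p | ‖p.2.1‖ ≤ D} ∩ {p | ‖p.2.2‖ ≤ D} with hK'
  have h1cont : Continuous fun p : Pt × Pt × Pt => p.1 := continuous_fst
  have h2cont : Continuous fun p : Pt × Pt × Pt => p.2.1 := continuous_fst.comp continuous_snd
  have h3cont : Continuous fun p : Pt × Pt × Pt => p.2.2 := continuous_snd.comp continuous_snd
  have hfcont : Continuous f := cont_mdet.abs
  have hclosed : IsClosed K' := by
    refine ((((((((isClosed_memtri A).inter (isClosed_memtri B)).inter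
      (isClosed_memtri C)).inter isClosed_iso).inter
      (isClosed_le hfcont continuous_const)).inter
      (isClosed_le h1cont.norm continuous_const)).inter
      (isClosed_le h2cont.norm continuous_const)).inter
      (isClosed_le h3cont.norm continuous_const))
  have hcompact : IsCompact K' := by
    refine ((isCompact_closedBall (0 : Pt) D).prod
        ((isCompact_closedBall (0 : Pt) D).prod
          (isCompact_closedBall (0 : Pt) D))).of_isClosed_subset hclosed ?_
    rintro p ⟨⟨⟨⟨⟨⟨⟨-, -⟩, -⟩, -⟩, -⟩, hp1⟩, hp2⟩, hp3⟩
    exact ⟨mem_closedBall_zero_iff.mpr hp1,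
      ⟨mem_closedBall_zero_iff.mpr hp2, mem_closedBall_zero_iff.mpr hp3⟩⟩
  have hmemK : ∀ S P R : Pt, IsIsosceles S P R → tri A B C ⊆ tri S P R →
      f (S, P, R) ≤ m0 → (S, P, R) ∈ K' := by
    intro S P R hiso hsub hle
    refine ⟨⟨⟨⟨⟨⟨⟨?_, ?_⟩, ?_⟩, hiso⟩, hle⟩, ?_⟩, ?_⟩, ?_⟩
    · exact hsub (mem_tri₁ A B C)
    · exact hsub (mem_tri₂ A B C)
    · exact hsub (mem_tri₃ A B C)
    · exact hbound S P R S hsub (mem_tri₁ S P R) hle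
    · exact hbound S P R P hsub (mem_tri₂ S P R) hle
    · exact hbound S P R R hsub (mem_tri₃ S P R) hle
  have hp0 : (S0, P0, R0) ∈ K' := hmemK S0 P0 R0 hiso0 hsub0 le_rfl
  obtain ⟨q, hqK, hqmin⟩ := hcompact.exists_isMinOn ⟨(S0, P0, R0), hp0⟩ hfcont.continuousOn
  obtain ⟨⟨⟨⟨⟨⟨⟨hqA, hqB⟩, hqC⟩, hqiso⟩, hqle⟩, -⟩, -⟩, -⟩ := hqK
  have hqsub : tri A B C ⊆ tri q.1 q.2.1 q.2.2 := by
    refine convexHull_min ?_ (convex_convexHull ℝ _)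
    intro x hx
    rcases hx with rfl | rfl | rfl <;> assumption
  refine ⟨q.1, q.2.1, q.2.2, ⟨?_, hqiso, hqsub⟩, ?_⟩
  · exact affineIndependent_of_mdet_ne_zero (mdet_ne_zero_of_subset hvol hqsub)
  · intro S' P' R' ⟨hind', hiso', hsub'⟩
    rw [triArea_eq, triArea_eq]
    have hfq : f q ≤ f (S', P', R') := by
      by_cases hle : f (S', P', R') ≤ m0
      · exact isMinOn_iff.mp hqmin _ (hmemK S' P' R' hiso' hsub' hle)
      · calc f q ≤ m0 := hqle
          _ ≤ f (S', P', R') := le_of_not_ge hle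
    exact mul_le_mul_of_nonneg_right hfq hk.le

end
end

section
/- Let ABC be a triangle with side lengths a < b < c whose angle at the vertex C is at least π/2 (i.e. ABC is a right or obtuse triangle). Then t(AB'C) > t(AB₁C). -/
open EuclideanGeometry MeasureTheory Real
open Pointwise

noncomputable section

/-- if the triangle `A B C` with side lengths `a < b < c` has a
right or obtuse angle at the vertex `C`, then `t(AB'C) > t(AB₁C)`. -/
theorem statement19 (A B C B' B₁ : Pt)
    (hABC : AffineIndependent ℝ ![A, B, C])
    (hab : dist B C < dist C A) (hbc : dist C A < dist A B)
    (hC : π / 2 ≤ ∠ A C B)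
    (hB'ray : OnRay C B B') (hB'dist : dist C B' = dist C A)
    (hB₁ray : OnRay A B B₁) (hB₁ne : B₁ ≠ A) (hB₁dist : dist B₁ C = dist C A) :
    triArea A B₁ C < triArea A B' C := by
  have hBC : B ≠ C := by
    intro h
    have h12 : ![A, B, C] 1 = ![A, B, C] 2 := by simpa using h
    have := hABC.injective h12
    simp at this
  have ha : 0 < dist B C := dist_pos.mpr hBC
  set a := dist B C with hadef
  set b := dist C A with hbdef
  set c := dist A B with hcdef
  have hb : 0 < b := lt_trans ha hab
  have hc : 0 < c := lt_trans hb hbc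
  -- extract the scalar t with B' - C = t • (B - C)
  have hy0 : B - C ≠ 0 := sub_ne_zero.mpr hBC
  obtain ⟨t, ht0, hty⟩ := hB'ray.exists_nonneg_left hy0
  have hta : t * a = b := by
    have h1 : ‖t • (B - C)‖ = ‖B' - C‖ := by rw [hty]
    rw [norm_smul, Real.norm_eq_abs, abs_of_nonneg ht0] at h1
    have h2 : ‖B - C‖ = a := (dist_eq_norm B C).symm
    have h3 : ‖B' - C‖ = b := by rw [← dist_eq_norm, dist_comm, hB'dist]
    rw [h2, h3] at h1
    exact h1
  have htpos : 0 < t := by nlinarith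
  -- extract the scalar s with B₁ - A = s • (B - A)
  have hBA : B - A ≠ 0 := sub_ne_zero.mpr (fun h => by
    rw [hcdef, h] at hc; simp at hc)
  obtain ⟨s, hs0, hsy⟩ := hB₁ray.exists_nonneg_left hBA
  have hspos : 0 < s := by
    rcases hs0.lt_or_eq with h | h
    · exact h
    · exfalso
      apply hB₁ne
      have : (0:ℝ) • (B - A) = B₁ - A := by rw [h]; exact hsy
      rw [zero_smul] at this
      exact sub_eq_zero.mp this.symm
  -- inner-product bookkeeping
  set x := A - C with hxdef
  set y := B - C with hydef
  set p : ℝ := inner ℝ x y with hpdef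
  have hbx : ‖x‖ = b := by rw [hxdef, ← norm_sub_rev, ← dist_eq_norm]
  have hay : ‖y‖ = a := (dist_eq_norm B C).symm
  have hxy : x - y = A - B := by rw [hxdef, hydef]; abel
  have hcxy : ‖x - y‖ = c := by rw [hxy, ← dist_eq_norm]
  -- the angle condition gives p ≤ 0
  have hp : p ≤ 0 := by
    have hang : Real.cos (∠ A C B) ≤ 0 := by
      apply Real.cos_nonpos_of_pi_div_two_le_of_le hC
      linarith [EuclideanGeometry.angle_le_pi A C B, Real.pi_pos]
    have hcos : Real.cos (∠ A C B) = p / (‖x‖ * ‖y‖) := by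
      rw [EuclideanGeometry.angle, InnerProductGeometry.cos_angle, hpdef, hxdef, hydef]
      norm_num
    rw [hcos, hbx, hay] at hang
    rcases div_nonpos_iff.mp hang with ⟨h1, h2⟩ | ⟨h1, _⟩
    · nlinarith [mul_pos hb ha]
    · exact h1
  -- the equation for s
  have hq : (inner ℝ x (y - x) : ℝ) = p - b ^ 2 := by
    rw [inner_sub_right, real_inner_self_eq_norm_sq, hbx, hpdef]
  have hB₁C : B₁ - C = x + s • (y - x) := by
    have h1 : B₁ - C = (B₁ - A) + (A - C) := by abel
    rw [h1, ← hsy, hxdef, hydef]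
    module
  have hnorm : ‖x + s • (y - x)‖ = b := by
    rw [← hB₁C, ← dist_eq_norm]; exact hB₁dist
  have hsq : b ^ 2 + 2 * (s * (p - b ^ 2)) + (s * c) ^ 2 = b ^ 2 := by
    have h2 : ‖x + s • (y - x)‖ ^ 2 = b ^ 2 := by rw [hnorm]
    rw [norm_add_sq_real, real_inner_smul_right, hq, norm_smul, Real.norm_eq_abs,
      abs_of_nonneg hs0, norm_sub_rev y x, hcxy, hbx] at h2
    exact h2
  have hscc : s * c ^ 2 = 2 * (b ^ 2 - p) := by
    have h3 : s * (2 * (p - b ^ 2) + s * c ^ 2) = 0 := by linear_combination hsq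
    have h4 : 2 * (p - b ^ 2) + s * c ^ 2 = 0 := by
      rcases mul_eq_zero.mp h3 with h | h
      · exact absurd h hspos.ne'
      · exact h
    linarith
  have hc2 : c ^ 2 = a ^ 2 + b ^ 2 - 2 * p := by
    have := norm_sub_sq_real x y
    rw [hcxy, hbx, hay, ← hpdef] at this
    linarith
  clear_value a b c x y p
  -- the key inequality s < t
  have hst : s < t := by
    have h5 : s * (a * c ^ 2) = 2 * a * (b ^ 2 - p) := by
      calc s * (a * c ^ 2) = a * (s * c ^ 2) := by ring
        _ = a * (2 * (b ^ 2 - p)) := by rw [hscc]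
        _ = 2 * a * (b ^ 2 - p) := by ring
    have h6 : t * (a * c ^ 2) = b * c ^ 2 := by
      calc t * (a * c ^ 2) = (t * a) * c ^ 2 := by ring
        _ = b * c ^ 2 := by rw [hta]
    have hab2 : 0 < (a - b) ^ 2 := by
      rw [sq]; exact mul_pos_of_neg_of_neg (by linarith) (by linarith)
    have h7 : 2 * a * (b ^ 2 - p) < b * c ^ 2 := by
      have key : b * c ^ 2 - 2 * a * (b ^ 2 - p)
          = b * (a - b) ^ 2 + 2 * (-p) * (b - a) := by rw [hc2]; ring
      have k1 : 0 < b * (a - b) ^ 2 := mul_pos hb hab2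
      have k2 : 0 ≤ -p * (b - a) := mul_nonneg (neg_nonneg.mpr hp) (sub_nonneg.mpr hab.le)
      linarith
    have hac : 0 < a * c ^ 2 := by positivity
    have h8 : s * (a * c ^ 2) < t * (a * c ^ 2) := by rw [h5, h6]; exact h7
    exact lt_of_mul_lt_mul_right h8 hac.le
  -- linear independence of (B - A, C - A)
  have hLI0 : LinearIndependent ℝ ![B - A, C - A] := by
    rw [affineIndependent_iff_linearIndependent_vsub ℝ ![A, B, C] 0] at hABC
    set e : Fin 2 → {i : Fin 3 // i ≠ 0} := ![⟨1, by decide⟩, ⟨2, by decide⟩] with hedef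
    have einj : Function.Injective e := by
      intro i j h
      fin_cases i <;> fin_cases j <;> first | rfl | (simp [hedef] at h)
    have h2 := hABC.comp e einj
    have heq : ((fun i : {i : Fin 3 // i ≠ 0} => ![A, B, C] ↑i -ᵥ ![A, B, C] 0) ∘ e)
        = ![B - A, C - A] := by
      funext j; fin_cases j <;> simp [hedef, vsub_eq_sub]
    rwa [heq] at h2
  have hB'A : B' - A = t • (B - A) + (1 - t) • (C - A) := by
    have h1 : B' - A = (B' - C) + (C - A) := by abel
    rw [h1, ← hty, hydef]
    module
  have hLI : LinearIndependent ℝ ![B' - A, C - A] := by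
    rw [LinearIndependent.pair_iff] at hLI0 ⊢
    intro α β h
    have h2 : (α * t) • (B - A) + (α * (1 - t) + β) • (C - A) = 0 := by
      rw [← h, hB'A]; module
    obtain ⟨h3, h4⟩ := hLI0 _ _ h2
    have hα : α = 0 := by
      rcases mul_eq_zero.mp h3 with h' | h'
      · exact h'
      · exact absurd h' htpos.ne'
    exact ⟨hα, by rw [hα] at h4; simpa using h4⟩
  -- a basis adapted to the triangle A B' C
  have ht' : t ≠ 0 := htpos.ne'
  have hcard : Fintype.card (Fin 2) = Module.finrank ℝ Pt := by
    simp [finrank_euclideanSpace]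
  set bas : Module.Basis (Fin 2) ℝ Pt := basisOfLinearIndependentOfCardEqFinrank hLI hcard
    with hbasdef
  have hbas : ⇑bas = ![B' - A, C - A] :=
    coe_basisOfLinearIndependentOfCardEqFinrank hLI hcard
  -- the linear map sending the triangle A B' C to A B₁ C
  set N : Matrix (Fin 2) (Fin 2) ℝ := !![s / t, 0; s - s / t, 1] with hNdef
  set M : Pt →ₗ[ℝ] Pt := Matrix.toLin bas bas N with hMdef
  have hdet : LinearMap.det M = s / t := by
    rw [hMdef, LinearMap.det_toLin, hNdef, Matrix.det_fin_two_of]; ring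
  have hM0 : M (B' - A) = B₁ - A := by
    have h0 : B' - A = bas 0 := by rw [hbas]; simp
    rw [h0, hMdef, Matrix.toLin_self, ← hsy]
    rw [Fin.sum_univ_two, hbas]
    simp only [hNdef, Matrix.cons_val', Matrix.cons_val_zero, Matrix.cons_val_one,
      Matrix.head_cons, Matrix.empty_val', Matrix.cons_val_fin_one, Matrix.head_fin_const,
      Matrix.of_apply]
    rw [hB'A]
    match_scalars <;> field_simp <;> ring
  have hM1 : M (C - A) = C - A := by
    have h0 : C - A = bas 1 := by rw [hbas]; simp
    rw [h0, hMdef, Matrix.toLin_self]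
    rw [Fin.sum_univ_two, hbas]
    simp [hNdef]
  -- the affine map
  set f : Pt →ᵃ[ℝ] Pt :=
    { toFun := fun z => M (z - A) + A
      linear := M
      map_vadd' := by
        intro q v
        simp only [vadd_eq_add]
        rw [show v + q - A = v + (q - A) by abel, map_add]
        abel } with hfdef
  have hfapp : ∀ z : Pt, f z = M (z - A) + A := fun z => rfl
  have hfA : f A = A := by rw [hfapp, sub_self, map_zero, zero_add]
  have hfB : f B' = B₁ := by rw [hfapp, hM0]; abel
  have hfC : f C = C := by rw [hfapp, hM1]; abel
  have himg : f '' tri A B' C = tri A B₁ C := by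
    rw [tri, tri, AffineMap.image_convexHull]
    congr 1
    rw [Set.image_insert_eq, Set.image_insert_eq, Set.image_singleton, hfA, hfB, hfC]
  have hcomp : ⇑f = (fun w : Pt => A + w) ∘ (⇑M) ∘ (fun z : Pt => -A + z) := by
    funext z
    show f z = A + M (-A + z)
    rw [hfapp, neg_add_eq_sub]
    exact add_comm _ _
  have himg2 : f '' tri A B' C = A +ᵥ (⇑M '' ((-A) +ᵥ tri A B' C)) := by
    rw [hcomp, Set.image_comp, Set.image_comp]
    rfl
  have hvol : volume (tri A B₁ C) = ENNReal.ofReal (s / t) * volume (tri A B' C) := by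
    rw [← himg, himg2, measure_vadd, MeasureTheory.Measure.addHaar_image_linearMap,
      measure_vadd, hdet, abs_of_pos (div_pos hspos htpos)]
  -- the measure of the container triangle is positive and finite
  have hfin : volume (tri A B' C) ≠ ⊤ := by
    have hcpt : IsCompact (tri A B' C) := (Set.toFinite _).isCompact_convexHull (𝕜 := ℝ)
    exact hcpt.measure_lt_top.ne
  have hspan : affineSpan ℝ ({A, B', C} : Set Pt) = ⊤ := by
    rw [AffineSubspace.affineSpan_eq_top_iff_vectorSpan_eq_top_of_nonempty ℝ Pt Pt
      ⟨A, by simp⟩]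
    apply eq_top_iff.mpr
    rw [← bas.span_eq]
    apply Submodule.span_le.mpr
    rintro - ⟨i, rfl⟩
    fin_cases i
    · show bas 0 ∈ vectorSpan ℝ ({A, B', C} : Set Pt)
      rw [hbas]
      simp only [Matrix.cons_val_zero]
      exact vsub_mem_vectorSpan ℝ (by simp) (by simp)
    · show bas 1 ∈ vectorSpan ℝ ({A, B', C} : Set Pt)
      rw [hbas]
      simp only [Matrix.cons_val_one, Matrix.head_cons]
      exact vsub_mem_vectorSpan ℝ (by simp) (by simp)
  have hpos : 0 < volume (tri A B' C) := by
    apply MeasureTheory.Measure.measure_pos_of_nonempty_interior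
    rw [tri, (convex_convexHull ℝ _).interior_nonempty_iff_affineSpan_eq_top,
      affineSpan_convexHull]
    exact hspan
  -- conclusion
  have hr : s / t < 1 := (div_lt_one htpos).mpr hst
  have hV : 0 < (volume (tri A B' C)).toReal := ENNReal.toReal_pos hpos.ne' hfin
  calc triArea A B₁ C = (volume (tri A B₁ C)).toReal := rfl
    _ = (s / t) * (volume (tri A B' C)).toReal := by
        rw [hvol, ENNReal.toReal_mul, ENNReal.toReal_ofReal (div_nonneg hs0 ht0)]
    _ < (volume (tri A B' C)).toReal := mul_lt_of_lt_one_left hV hr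
    _ = triArea A B' C := rfl
end
end
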